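/- arXiv:2207.14654 — 4 statements merged into one kernel-verified Lean document; each statement's English description precedes it below -/
import Mathlib

section
/- Let Φ be a dimension function and suppose there are t₀ > 0 and H:(0,t₀]→(0,∞), with H(t) non-decreasing as t decreases and H(t) → ∞ as t → 0⁺, such that Φ(t) ≥ H(t)·log|log t|/|log t| for all 0 < t ≤ t₀. Then for all sufficiently large N (it suffices that B^N ≤ t₀), for every positive integer k < ζ_N^H, every ω ∈ Ω and every x ∈ C_ω, one has |I_{N+k}(x)| > |I_N(x)|^{1+Φ(|I_N(x)|)}; i.e., there are no pairs of Moran intervals I_N(x), I_{N+k}(x) with |I_{N+k}(x)| ≤ |I_N(x)|^{1+Φ(|I_N(x)|)}. -/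
open MeasureTheory ProbabilityTheory Filter Set Metric
open scoped ENNReal NNReal

noncomputable section

/-- The step-`v.length` Moran interval determined by the digit string `v`
(`false` = left child, `true` = right child), where `a n`, `b n` are the scaling
ratios used at step `n` (`n ≥ 1`).  The auxiliary version tracks the current step,
left endpoint and length. -/
def moranAux (a b : ℕ → ℝ) : ℕ → ℝ → ℝ → List Bool → Set ℝ
  | _, l, len, [] => Set.Icc l (l + len)
  | n, l, len, c :: v =>
    if c then moranAux a b (n + 1) (l + len - b (n + 1) * len) (b (n + 1) * len) v
    else moranAux a b (n + 1) l (a (n + 1) * len) v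

def moranInt (a b : ℕ → ℝ) (v : List Bool) : Set ℝ := moranAux a b 0 0 1 v

/-- The length `|I_v|` of the Moran interval with digit string `v`. -/
def moranLenAux (a b : ℕ → ℝ) : ℕ → ℝ → List Bool → ℝ
  | _, len, [] => len
  | n, len, c :: v => moranLenAux a b (n + 1) ((if c then b (n + 1) else a (n + 1)) * len) v

def moranLen (a b : ℕ → ℝ) (v : List Bool) : ℝ := moranLenAux a b 0 1 v

/-- The mass `μ_ω(I_v)` assigned to the Moran interval with digit string `v`. -/
def moranMassAux (p : ℕ → ℝ) : ℕ → ℝ → List Bool → ℝ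
  | _, m, [] => m
  | n, m, c :: v => moranMassAux p (n + 1) ((if c then 1 - p (n + 1) else p (n + 1)) * m) v

def moranMass (p : ℕ → ℝ) (v : List Bool) : ℝ := moranMassAux p 0 1 v

/-- The Moran set `C_ω = ⋂ₙ C_ω^{(n)}`. -/
def moranSet (a b : ℕ → ℝ) : Set ℝ :=
  ⋂ n : ℕ, ⋃ v ∈ {v : List Bool | v.length = n}, moranInt a b v

/-- The (topological) support of a measure on `ℝ`. -/
def measSupport (μ : Measure ℝ) : Set ℝ := {x : ℝ | ∀ r : ℝ, 0 < r → 0 < μ (ball x r)}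

/-- A dimension function: `Φ : (0,1) → ℝ⁺` with `t ^ (1 + Φ t)` decreasing to `0`
as `t` decreases to `0`. -/
def DimensionFunction (Φ : ℝ → ℝ) : Prop :=
  (∀ t, t ∈ Ioo (0:ℝ) 1 → 0 ≤ Φ t) ∧
  (∀ s t, s ∈ Ioo (0:ℝ) 1 → t ∈ Ioo (0:ℝ) 1 → s ≤ t → s ^ (1 + Φ s) ≤ t ^ (1 + Φ t)) ∧
  Tendsto (fun t : ℝ => t ^ (1 + Φ t)) (nhdsWithin 0 (Ioi 0)) (nhds 0)

/-- A large dimension function: `Φ(t) = H(t)·log|log t|/|log t|` with `H(t) → ∞` as `t → 0⁺`. -/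
def LargeDimFn (Φ : ℝ → ℝ) : Prop :=
  DimensionFunction Φ ∧
  ∃ H : ℝ → ℝ, (∀ t, t ∈ Ioo (0:ℝ) 1 → Φ t = H t * Real.log |Real.log t| / |Real.log t|) ∧
    Tendsto H (nhdsWithin 0 (Ioi 0)) atTop

/-- A small dimension function: `Φ(t) = H(t)·log|log t|/|log t|` with `H(t) → 0` as `t → 0⁺`. -/
def SmallDimFn (Φ : ℝ → ℝ) : Prop :=
  DimensionFunction Φ ∧
  ∃ H : ℝ → ℝ, (∀ t, t ∈ Ioo (0:ℝ) 1 → Φ t = H t * Real.log |Real.log t| / |Real.log t|) ∧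
    Tendsto H (nhdsWithin 0 (Ioi 0)) (nhds 0)

/-- `d` is admissible for the upper `Φ`-dimension of `μ`: there are `C₁, C₂ > 0` with
`μ(B(x,R)) ≤ C₂ (R/r)^d μ(B(x,r))` for all `x ∈ supp μ` and `0 < r < R^{1+Φ(R)} ≤ R ≤ C₁`. -/
def upperDimAdmissible (Φ : ℝ → ℝ) (μ : Measure ℝ) (d : ℝ) : Prop :=
  ∃ C₁ > (0:ℝ), ∃ C₂ > (0:ℝ), ∀ x ∈ measSupport μ, ∀ R r : ℝ,
    0 < r → r < R ^ (1 + Φ R) → R ^ (1 + Φ R) ≤ R → R ≤ C₁ →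
    μ (ball x R) ≤ ENNReal.ofReal (C₂ * (R / r) ^ d) * μ (ball x r)

/-- The upper `Φ`-dimension of a measure `μ`. -/
noncomputable def upperPhiDim (Φ : ℝ → ℝ) (μ : Measure ℝ) : ℝ≥0∞ :=
  ⨅ (d : ℝ) (_ : upperDimAdmissible Φ μ d), ENNReal.ofReal d

/-- `d` is admissible for the lower `Φ`-dimension of `μ`. -/
def lowerDimAdmissible (Φ : ℝ → ℝ) (μ : Measure ℝ) (d : ℝ) : Prop :=
  ∃ C₁ > (0:ℝ), ∃ C₂ > (0:ℝ), ∀ x ∈ measSupport μ, ∀ R r : ℝ,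
    0 < r → r < R ^ (1 + Φ R) → R ^ (1 + Φ R) ≤ R → R ≤ C₁ →
    ENNReal.ofReal (C₂ * (R / r) ^ d) * μ (ball x r) ≤ μ (ball x R)

/-- The lower `Φ`-dimension of a measure `μ`. -/
noncomputable def lowerPhiDim (Φ : ℝ → ℝ) (μ : Measure ℝ) : ℝ≥0∞ :=
  ⨆ (d : ℝ) (_ : lowerDimAdmissible Φ μ d), ENNReal.ofReal d

/-- The upper quasi-Assouad dimension `dim_qA μ = lim_{θ→1⁻} dim̄_{Φ_θ} μ`, where
`Φ_θ = 1/θ - 1`; by monotonicity the limit is the supremum over `θ ∈ (0,1)`. -/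
noncomputable def qADim (μ : Measure ℝ) : ℝ≥0∞ :=
  ⨆ (θ : ℝ) (_ : θ ∈ Ioo (0:ℝ) 1), upperPhiDim (fun _ => 1 / θ - 1) μ

/-- The upper local dimension `limsup_{r→0⁺} log μ(B(x,r)) / log r`. -/
noncomputable def upperLocalDim (μ : Measure ℝ) (x : ℝ) : ℝ≥0∞ :=
  Filter.limsup (fun r : ℝ => ENNReal.ofReal (Real.log ((μ (ball x r)).toReal) / Real.log r))
    (nhdsWithin 0 (Ioi 0))

/-- The lower local dimension `liminf_{r→0⁺} log μ(B(x,r)) / log r`. -/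
noncomputable def lowerLocalDim (μ : Measure ℝ) (x : ℝ) : ℝ≥0∞ :=
  Filter.liminf (fun r : ℝ => ENNReal.ofReal (Real.log ((μ (ball x r)).toReal) / Real.log r))
    (nhdsWithin 0 (Ioi 0))

/-- `μ` is the random Moran measure determined by the scaling data `a, b` and
probability data `p`: a Borel probability measure supported on the Moran set whose
value on each Moran interval is the prescribed mass. -/
def IsMoranMeasure (a b p : ℕ → ℝ) (μ : Measure ℝ) : Prop :=
  IsProbabilityMeasure μ ∧ measSupport μ = moranSet a b ∧
    ∀ v : List Bool, μ (moranInt a b v) = ENNReal.ofReal (moranMass p v)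

/-- The random variable `Y_n(θ)`. -/
def Yrv {Ω : Type*} (a b p : Ω → ℕ → ℝ) (θ : ℝ) (n : ℕ) (ω : Ω) : ℝ :=
  if p ω n ≤ a ω n ^ θ / (a ω n ^ θ + b ω n ^ θ) then Real.log (p ω n)
  else Real.log (1 - p ω n)

/-- The random variable `Z_n(θ)`. -/
def Zrv {Ω : Type*} (a b p : Ω → ℕ → ℝ) (θ : ℝ) (n : ℕ) (ω : Ω) : ℝ :=
  if p ω n ≤ a ω n ^ θ / (a ω n ^ θ + b ω n ^ θ) then Real.log (a ω n)
  else Real.log (b ω n)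

/-- The random variable `Y_n'(θ)` (the two cases interchanged). -/
def Yrv' {Ω : Type*} (a b p : Ω → ℕ → ℝ) (θ : ℝ) (n : ℕ) (ω : Ω) : ℝ :=
  if a ω n ^ θ / (a ω n ^ θ + b ω n ^ θ) ≤ p ω n then Real.log (p ω n)
  else Real.log (1 - p ω n)

/-- The random variable `Z_n'(θ)` (the two cases interchanged). -/
def Zrv' {Ω : Type*} (a b p : Ω → ℕ → ℝ) (θ : ℝ) (n : ℕ) (ω : Ω) : ℝ :=
  if a ω n ^ θ / (a ω n ^ θ + b ω n ^ θ) ≤ p ω n then Real.log (a ω n)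
  else Real.log (b ω n)

/-- `G(θ) = E(Y₁(θ)) / E(Z₁(θ))`. -/
noncomputable def Gfn {Ω : Type*} [MeasurableSpace Ω] (P : Measure Ω)
    (a b p : Ω → ℕ → ℝ) (θ : ℝ) : ℝ :=
  (∫ ω, Yrv a b p θ 1 ω ∂P) / (∫ ω, Zrv a b p θ 1 ω ∂P)

/-- `G'(θ) = E(Y₁'(θ)) / E(Z₁'(θ))`. -/
noncomputable def Gfn' {Ω : Type*} [MeasurableSpace Ω] (P : Measure Ω)
    (a b p : Ω → ℕ → ℝ) (θ : ℝ) : ℝ :=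
  (∫ ω, Yrv' a b p θ 1 ω ∂P) / (∫ ω, Zrv' a b p θ 1 ω ∂P)

/-- `ζ_N^H = H(B^N)·log(N·|log B|)/|log A|`. -/
noncomputable def zetaNH (A B : ℝ) (H : ℝ → ℝ) (N : ℕ) : ℝ :=
  H (B ^ N) * Real.log (N * |Real.log B|) / |Real.log A|

/-- The full random data of the (two-children, one-dimensional) random Moran
construction: i.i.d. scaling pairs `(aₙ, bₙ)` with values in
`{(x,y) : A ≤ min x y, x + y ≤ B}`, i.i.d. probabilities `pₙ ∈ [0,1]` independent of
the scaling pairs, with negative moments `E(a₁^{-t}), E(b₁^{-t}), E(p₁^{-t}),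
E((1-p₁)^{-t}) < ∞` for some `t > 0`. -/
structure MoranSystem (Ω : Type*) [MeasurableSpace Ω] (P : Measure Ω) (A B : ℝ) where
  a : Ω → ℕ → ℝ
  b : Ω → ℕ → ℝ
  p : Ω → ℕ → ℝ
  meas_ab : ∀ n, Measurable fun ω => (a ω n, b ω n)
  meas_p : ∀ n, Measurable fun ω => p ω n
  range_ab : ∀ ω n, A ≤ min (a ω n) (b ω n) ∧ a ω n + b ω n ≤ B
  range_p : ∀ ω n, p ω n ∈ Icc (0:ℝ) 1
  indep_ab : iIndepFun (fun n ω => (a ω n, b ω n)) P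
  ident_ab : ∀ n, IdentDistrib (fun ω => (a ω n, b ω n)) (fun ω => (a ω 1, b ω 1)) P P
  indep_p : iIndepFun (fun n ω => p ω n) P
  ident_p : ∀ n, IdentDistrib (fun ω => p ω n) (fun ω => p ω 1) P P
  indep_ab_p : IndepFun (fun ω (n : ℕ) => (a ω n, b ω n)) (fun ω (n : ℕ) => p ω n) P
  moment : ∃ t : ℝ, 0 < t ∧ Integrable (fun ω => a ω 1 ^ (-t)) P ∧
    Integrable (fun ω => b ω 1 ^ (-t)) P ∧ Integrable (fun ω => p ω 1 ^ (-t)) P ∧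
    Integrable (fun ω => (1 - p ω 1) ^ (-t)) P

/-- The value `α = max(log P₀/log A₀, log Q₀/log B₀)`, understood as `∞` when
`P₀ = 0` or `Q₀ = 0`. -/
noncomputable def alphaVal (P₀ Q₀ A₀ B₀ : ℝ) : ℝ≥0∞ :=
  if P₀ = 0 ∨ Q₀ = 0 then ⊤
  else ENNReal.ofReal (max (Real.log P₀ / Real.log A₀) (Real.log Q₀ / Real.log B₀))

lemma moranLenAux_append (a b : ℕ → ℝ) (v : List Bool) :
    ∀ n s w, moranLenAux a b n s (v ++ w)
      = moranLenAux a b (n + v.length) (moranLenAux a b n s v) w := by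
  induction v with
  | nil => intro n s w; simp [moranLenAux]
  | cons c v ih =>
      intro n s w
      simp only [List.cons_append, moranLenAux, List.length_cons]
      rw [show n + (v.length + 1) = n + 1 + v.length from by omega]
      exact ih (n + 1) _ w

lemma moranLenAux_lower (A : ℝ) (hA : 0 ≤ A) (a b : ℕ → ℝ)
    (hab : ∀ n, A ≤ a n ∧ A ≤ b n) (v : List Bool) :
    ∀ n s, 0 ≤ s → s * A ^ v.length ≤ moranLenAux a b n s v := by
  induction v with
  | nil => intro n s hs; simp [moranLenAux]
  | cons c v ih =>
      intro n s hs
      simp only [moranLenAux, List.length_cons]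
      have hf : A ≤ (if c then b (n+1) else a (n+1)) := by
        cases c
        · simpa using (hab (n+1)).1
        · simpa using (hab (n+1)).2
      calc s * A ^ (v.length + 1) = (A * s) * A ^ v.length := by ring
        _ ≤ ((if c then b (n+1) else a (n+1)) * s) * A ^ v.length :=
            mul_le_mul_of_nonneg_right (mul_le_mul_of_nonneg_right hf hs)
              (pow_nonneg hA _)
        _ ≤ _ := ih (n+1) _ (mul_nonneg (le_trans hA hf) hs)

lemma moranLenAux_upper (A B : ℝ) (hA : 0 ≤ A) (a b : ℕ → ℝ)
    (hab : ∀ n, (A ≤ a n ∧ a n ≤ B) ∧ (A ≤ b n ∧ b n ≤ B)) (v : List Bool) :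
    ∀ n s, 0 ≤ s → moranLenAux a b n s v ≤ s * B ^ v.length := by
  have hAB : A ≤ B := le_trans (hab 0).1.1 (hab 0).1.2
  have hB : 0 ≤ B := le_trans hA hAB
  induction v with
  | nil => intro n s hs; simp [moranLenAux]
  | cons c v ih =>
      intro n s hs
      simp only [moranLenAux, List.length_cons]
      have hf : (if c then b (n+1) else a (n+1)) ≤ B := by
        cases c
        · simpa using (hab (n+1)).1.2
        · simpa using (hab (n+1)).2.2
      have hf0 : 0 ≤ (if c then b (n+1) else a (n+1)) := by
        cases c
        · simpa using le_trans hA (hab (n+1)).1.1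
        · simpa using le_trans hA (hab (n+1)).2.1
      calc moranLenAux a b (n+1) ((if c then b (n+1) else a (n+1)) * s) v
          ≤ ((if c then b (n+1) else a (n+1)) * s) * B ^ v.length :=
            ih (n+1) _ (mul_nonneg hf0 hs)
        _ ≤ (B * s) * B ^ v.length :=
            mul_le_mul_of_nonneg_right (mul_le_mul_of_nonneg_right hf hs)
              (pow_nonneg hB _)
        _ = s * B ^ (v.length + 1) := by ring

/-- Lemma 4(i): if `Φ(t) ≥ H(t)·log|log t|/|log t|` on `(0,t₀]` with
`H` non-decreasing as `t` decreases and `H(t) → ∞`, then for `N` with `B^N ≤ t₀` and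
`0 < k < ζ_N^H` there are no Moran intervals `I_{N+k} ⊆ I_N` with
`|I_{N+k}| ≤ |I_N|^{1+Φ(|I_N|)}`. -/
theorem no_short_descendants (A B : ℝ) (hA : 0 < A) (hAB : A < B) (hB1 : B < 1)
    (a b : ℕ → ℝ) (hab : ∀ n, A ≤ min (a n) (b n) ∧ a n + b n ≤ B)
    (Φ : ℝ → ℝ) (hΦ : DimensionFunction Φ)
    (t₀ : ℝ) (ht₀ : 0 < t₀) (H : ℝ → ℝ)
    (hHpos : ∀ t : ℝ, 0 < t → t ≤ t₀ → 0 < H t)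
    (hHmono : ∀ s t : ℝ, 0 < s → s ≤ t → t ≤ t₀ → H t ≤ H s)
    (hHtop : Tendsto H (nhdsWithin 0 (Ioi 0)) atTop)
    (hΦH : ∀ t : ℝ, 0 < t → t ≤ t₀ → H t * Real.log |Real.log t| / |Real.log t| ≤ Φ t)
    (N : ℕ) (hN : B ^ N ≤ t₀) (k : ℕ) (hk : 0 < k) (hkz : (k : ℝ) < zetaNH A B H N)
    (v u : List Bool) (hv : v.length = N) (hu : u.length = N + k) (hvu : v <+: u) :
    moranLen a b v ^ (1 + Φ (moranLen a b v)) < moranLen a b u := by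
  obtain ⟨w, rfl⟩ := hvu
  have hwlen : w.length = k := by
    have := hu
    simp only [List.length_append, hv] at this
    omega
  -- basic positivity facts
  have hB0 : (0:ℝ) < B := hA.trans hAB
  have hA1 : A < 1 := hAB.trans hB1
  have habA : ∀ n, A ≤ a n ∧ A ≤ b n := fun n =>
    ⟨le_trans (hab n).1 (min_le_left _ _), le_trans (hab n).1 (min_le_right _ _)⟩
  have habAB : ∀ n, (A ≤ a n ∧ a n ≤ B) ∧ (A ≤ b n ∧ b n ≤ B) := by
    intro n
    have h1 := (habA n).1; have h2 := (habA n).2; have h3 := (hab n).2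
    exact ⟨⟨h1, by linarith⟩, ⟨h2, by linarith⟩⟩
  set L := moranLen a b v with hLdef
  have hLpos : 0 < L := by
    have := moranLenAux_lower A hA.le a b habA v 0 1 zero_le_one
    have : A ^ v.length ≤ L := by simpa [moranLen, hLdef] using this
    exact lt_of_lt_of_le (pow_pos hA _) this
  have hLle : L ≤ B ^ N := by
    have := moranLenAux_upper A B hA.le a b habAB v 0 1 zero_le_one
    simpa [moranLen, hLdef, hv] using this
  -- N ≠ 0
  have hN0 : N ≠ 0 := by
    intro h
    rw [h] at hkz
    simp [zetaNH] at hkz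
    have : (0:ℝ) < k := by exact_mod_cast hk
    linarith
  have hBN1 : B ^ N < 1 := pow_lt_one₀ hB0.le hB1 hN0
  have hL1 : L < 1 := lt_of_le_of_lt hLle hBN1
  have hlogL : Real.log L < 0 := Real.log_neg hLpos hL1
  have hlogA : Real.log A < 0 := Real.log_neg hA hA1
  have hlogB : Real.log B < 0 := Real.log_neg hB0 hB1
  have habsA : |Real.log A| = -Real.log A := abs_of_neg hlogA
  have habsB : |Real.log B| = -Real.log B := abs_of_neg hlogB
  have habsL : |Real.log L| = -Real.log L := abs_of_neg hlogL
  have hNpos : (0:ℝ) < N := by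
    exact_mod_cast Nat.pos_of_ne_zero hN0
  have hNlogB : (0:ℝ) < N * |Real.log B| := by
    rw [habsB]; exact mul_pos hNpos (by linarith)
  -- ζ > 1 hence log(N|log B|) > 0
  have hk1 : (1:ℝ) ≤ k := by exact_mod_cast hk
  have hzeta1 : (1:ℝ) < zetaNH A B H N := lt_of_le_of_lt hk1 hkz
  have hHB : 0 < H (B ^ N) := hHpos _ (pow_pos hB0 N) hN
  have habsApos : 0 < |Real.log A| := by rw [habsA]; linarith
  have hlogNB : 0 < Real.log ((N : ℝ) * |Real.log B|) := by
    by_contra h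
    push_neg at h
    have : zetaNH A B H N ≤ 0 := by
      unfold zetaNH
      apply div_nonpos_of_nonpos_of_nonneg _ (abs_nonneg _)
      exact mul_nonpos_of_nonneg_of_nonpos hHB.le h
    linarith
  have hNB1 : (1:ℝ) < (N : ℝ) * |Real.log B| := by
    by_contra h
    push_neg at h
    exact absurd (Real.log_nonpos hNlogB.le h) (not_le.mpr hlogNB)
  -- |log L| ≥ N |log B|
  have hlogle : Real.log L ≤ Real.log (B ^ N) :=
    Real.log_le_log hLpos hLle
  have hlogBN : Real.log (B ^ N) = (N : ℝ) * Real.log B := by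
    rw [Real.log_pow]
  have habsLge : (N : ℝ) * |Real.log B| ≤ |Real.log L| := by
    rw [habsL, habsB]
    rw [hlogBN] at hlogle
    linarith
  have habsLpos : 0 < |Real.log L| := lt_of_lt_of_le hNlogB habsLge
  -- chain of inequalities
  have hHL : H (B ^ N) ≤ H L := hHmono L (B ^ N) hLpos hLle hN
  have hloglog : Real.log ((N : ℝ) * |Real.log B|) ≤ Real.log |Real.log L| :=
    Real.log_le_log hNlogB habsLge
  have hstep1 : H (B ^ N) * Real.log ((N : ℝ) * |Real.log B|)
      ≤ H L * Real.log |Real.log L| :=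
    mul_le_mul hHL hloglog hlogNB.le (le_trans hHB.le hHL)
  have hstep2 : H L * Real.log |Real.log L| ≤ Φ L * |Real.log L| := by
    have := hΦH L hLpos (hLle.trans hN)
    rw [div_le_iff₀ habsLpos] at this
    linarith
  have hkA : (k : ℝ) * |Real.log A| < Φ L * |Real.log L| := by
    have : (k : ℝ) * |Real.log A| < zetaNH A B H N * |Real.log A| :=
      (mul_lt_mul_iff_left₀ habsApos).mpr hkz
    have hz : zetaNH A B H N * |Real.log A|
        = H (B ^ N) * Real.log ((N : ℝ) * |Real.log B|) := by
      unfold zetaNH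
      field_simp
    rw [hz] at this
    linarith
  -- key inequality: L ^ Φ L < A ^ k
  have hkey : L ^ Φ L < A ^ k := by
    have h1 : L ^ Φ L = Real.exp (Φ L * Real.log L) := by
      rw [Real.rpow_def_of_pos hLpos]
      ring_nf
    have h2 : (A : ℝ) ^ k = Real.exp ((k : ℝ) * Real.log A) := by
      rw [← Real.log_pow, Real.exp_log (pow_pos hA k)]
    rw [h1, h2]
    apply Real.exp_lt_exp.mpr
    rw [habsA, habsL] at hkA
    nlinarith
  -- conclude
  have hsplit : L ^ (1 + Φ L) = L * L ^ Φ L := by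
    rw [Real.rpow_add hLpos, Real.rpow_one]
  have hlen : L * A ^ k ≤ moranLen a b (v ++ w) := by
    have := moranLenAux_append a b v 0 1 w
    have hlow := moranLenAux_lower A hA.le a b habA w (0 + v.length) L hLpos.le
    rw [hwlen] at hlow
    calc L * A ^ k ≤ moranLenAux a b (0 + v.length) L w := hlow
      _ = moranLen a b (v ++ w) := by
          rw [moranLen, this]
          rfl
  calc L ^ (1 + Φ L) = L * L ^ Φ L := hsplit
    _ < L * A ^ k := by
        exact (mul_lt_mul_iff_right₀ hLpos).mpr hkey
    _ ≤ moranLen a b (v ++ w) := hlen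

end
end

section
/- Fix θ ≥ 0 and δ > 0. There exists h₀ > 0 such that if H is any constant function with H ≥ h₀ then P{ω ∈ Ω : for infinitely many N there exists m ≥ ζ_N^H with |(Σ_{n=N+1}^{N+m} Y_n(θ)(ω))/(Σ_{n=N+1}^{N+m} Z_n(θ)(ω)) − E(Y_1(θ))/E(Z_1(θ))| > δ} = 0. The same statement holds with Y_n'(θ), Z_n'(θ) in place of Y_n(θ), Z_n(θ). -/
open MeasureTheory ProbabilityTheory Filter Set Metric
open scoped ENNReal NNReal

noncomputable section

/-!
The variables `Yₙ(θ)`, `Zₙ(θ)` are measurable functions of the i.i.d. steps `((aₙ, bₙ), pₙ)`, so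
each sequence is i.i.d.; `Z` is bounded with negative mean and `-Y` has an exponential moment, so
both satisfy Cramér's condition `0 ∈ interior (integrableExpSet _ _)`. Chernoff bounds, together
with the continuity of division at `(E Y₁, E Z₁)`, then bound the probability that the ratio of the
sums over a window of length `m` deviates by more than `δ` by `4ρ^m` for some `ρ < 1`. Summing over
`m ≥ ζ_N` gives `O(ρ^ζ_N) = O(N^(-h |log ρ| / |log A|))`, which is summable as soon as
`h ≥ 2 |log A| / |log ρ|`, and Borel–Cantelli concludes.
-/

open scoped Topology

lemma Real.exp_neg_mul_log_le_rpow_add {x t : ℝ} (hx : x ∈ Icc (0 : ℝ) 1) (ht : t ≠ 0) :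
    Real.exp (-t * Real.log x) ≤ x ^ (-t) + (1 - x) ^ (-t) := by
  rcases hx.1.eq_or_lt with rfl | hx0
  · simp [Real.zero_rpow (neg_ne_zero.2 ht)]
  · rw [Real.rpow_def_of_pos hx0, mul_comm]
    exact le_add_of_nonneg_right (Real.rpow_nonneg (sub_nonneg.2 hx.2) _)

lemma exists_pos_forall_abs_div_sub_div_lt {y₀ z₀ δ : ℝ} (hz₀ : z₀ ≠ 0) (hδ : 0 < δ) :
    ∃ ε > 0, ∀ y z, |y - y₀| < ε → |z - z₀| < ε → |y / z - y₀ / z₀| < δ := by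
  have hdiv : ContinuousAt (fun q : ℝ × ℝ ↦ q.1 / q.2) (y₀, z₀) :=
    continuousAt_fst.div continuousAt_snd hz₀
  obtain ⟨ε, hε, H⟩ := Metric.continuousAt_iff.1 hdiv δ hδ
  refine ⟨ε, hε, fun y z hy hz ↦ ?_⟩
  simpa [Real.dist_eq] using
    H (x := (y, z)) (by simpa [Prod.dist_eq, Real.dist_eq] using max_lt hy hz)

lemma measure_exists_ge_le {Ω : Type*} {mΩ : MeasurableSpace Ω} {μ : Measure Ω}
    [IsFiniteMeasure μ] {E : ℕ → Set Ω} {C ρ : ℝ} (hC : 0 ≤ C) (hρ0 : 0 ≤ ρ) (hρ1 : ρ < 1)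
    (hE : ∀ m, μ.real (E m) ≤ C * ρ ^ m) (ζ : ℝ) :
    μ {ω | ∃ m : ℕ, ζ ≤ m ∧ ω ∈ E m} ≤ ENNReal.ofReal (C * ρ ^ ⌈ζ⌉₊ * (1 - ρ)⁻¹) := by
  have hsub : {ω | ∃ m : ℕ, ζ ≤ m ∧ ω ∈ E m} ⊆ ⋃ k, E (⌈ζ⌉₊ + k) := by
    rintro ω ⟨m, hm, hω⟩
    exact mem_iUnion.2 ⟨m - ⌈ζ⌉₊, by rwa [Nat.add_sub_cancel' (Nat.ceil_le.2 hm)]⟩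
  have hgeom : HasSum (fun k ↦ C * ρ ^ (⌈ζ⌉₊ + k)) (C * ρ ^ ⌈ζ⌉₊ * (1 - ρ)⁻¹) := by
    simpa only [pow_add, mul_assoc] using
      (hasSum_geometric_of_lt_one hρ0 hρ1).mul_left (C * ρ ^ ⌈ζ⌉₊)
  calc μ _ ≤ ∑' k, μ (E (⌈ζ⌉₊ + k)) := (measure_mono hsub).trans (measure_iUnion_le _)
    _ ≤ ∑' k, ENNReal.ofReal (C * ρ ^ (⌈ζ⌉₊ + k)) := by
        gcongr with k
        rw [← ofReal_measureReal]
        exact ENNReal.ofReal_le_ofReal (hE _)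
    _ = _ := by
        rw [← ENNReal.ofReal_tsum_of_nonneg (fun k ↦ by positivity) hgeom.summable, hgeom.tsum_eq]

lemma summable_pow_ceil_zetaNH {A B ρ h : ℝ} (hA : Real.log A ≠ 0) (hB : Real.log B ≠ 0)
    (hρ0 : 0 < ρ) (hρ1 : ρ < 1) (hh : 2 * |Real.log A| / -Real.log ρ ≤ h) :
    Summable fun N : ℕ ↦ ρ ^ ⌈zetaNH A B (fun _ ↦ h) N⌉₊ := by
  set κ := h * Real.log ρ / |Real.log A| with hκdef
  have hlogρ : 0 < -Real.log ρ := neg_pos.2 (Real.log_neg hρ0 hρ1)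
  have hκ : κ < -1 := by
    rw [div_le_iff₀ hlogρ] at hh
    rw [div_lt_iff₀ (abs_pos.2 hA)]
    nlinarith [abs_pos.2 hA]
  refine Summable.of_norm_bounded_eventually_nat
    ((Real.summable_nat_rpow.2 hκ).mul_right (|Real.log B| ^ κ)) ?_
  filter_upwards [eventually_ge_atTop 1] with N hN
  have hNB : 0 < (N : ℝ) * |Real.log B| := by positivity
  rw [Real.norm_of_nonneg (by positivity), ← Real.mul_rpow (by positivity) (by positivity),
    ← Real.rpow_natCast]
  calc ρ ^ (⌈zetaNH A B (fun _ ↦ h) N⌉₊ : ℝ) ≤ ρ ^ zetaNH A B (fun _ ↦ h) N :=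
        Real.rpow_le_rpow_of_exponent_ge hρ0 hρ1.le (Nat.le_ceil _)
    _ = _ := by
        rw [Real.rpow_def_of_pos hρ0, Real.rpow_def_of_pos hNB, zetaNH, hκdef]
        ring_nf

namespace ProbabilityTheory

variable {Ω ι α β : Type*} {mΩ : MeasurableSpace Ω} {μ : Measure Ω}
  [MeasurableSpace α] [MeasurableSpace β] {X : Ω → ℝ} {V : ι → Ω → ℝ} {j : ι}

theorem iIndepFun.prodMk_of_indepFun {X : ι → Ω → α} {Y : ι → Ω → β}
    (hXm : ∀ i, Measurable (X i)) (hYm : ∀ i, Measurable (Y i))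
    (hX : iIndepFun X μ) (hY : iIndepFun Y μ)
    (hXY : IndepFun (fun ω i ↦ X i ω) (fun ω i ↦ Y i ω) μ) :
    iIndepFun (fun i ω ↦ (X i ω, Y i ω)) μ := by
  have := hX.isProbabilityMeasure
  refine iIndepFun_iff_finset.2 fun s ↦ ?_
  change iIndepFun (fun (i : s) ω ↦ (X i ω, Y i ω)) μ
  rw [iIndepFun_iff_map_fun_eq_pi_map (ι := s) (fun i ↦ ((hXm i).prodMk (hYm i)).aemeasurable)]
  let e := MeasurableEquiv.arrowProdEquivProdArrow α β s
  have hpair : ∀ i : s, μ.map (fun ω ↦ (X i ω, Y i ω)) = (μ.map (X i)).prod (μ.map (Y i)) :=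
    fun i ↦ (indepFun_iff_map_prod_eq_prod_map_map (hXm i).aemeasurable
      (hYm i).aemeasurable).1 (hXY.comp (measurable_pi_apply i.1) (measurable_pi_apply i.1))
  have hrestr : IndepFun (fun ω (i : s) ↦ X i ω) (fun ω (i : s) ↦ Y i ω) μ :=
    hXY.comp (measurable_pi_lambda _ fun i : s ↦ measurable_pi_apply i.1)
      (measurable_pi_lambda _ fun i : s ↦ measurable_pi_apply i.1)
  apply e.map_measurableEquiv_injective
  simp only [hpair]
  rw [(measurePreserving_arrowProdEquivProdArrow α β s _ _).map_eq,
    Measure.map_map e.measurable (measurable_pi_lambda _ fun i ↦ (hXm i).prodMk (hYm i)),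
    ← (hX.restrict s).map_fun_eq_pi_map (fun i : s ↦ (hXm i).aemeasurable),
    ← (hY.restrict s).map_fun_eq_pi_map (fun i : s ↦ (hYm i).aemeasurable),
    ← (indepFun_iff_map_prod_eq_prod_map_map (by fun_prop) (by fun_prop)).1 hrestr]
  rfl

lemma mem_integrableExpSet_of_mul_le [IsFiniteMeasure μ] (hX : Measurable X) {l C : ℝ}
    (h : ∀ ω, l * X ω ≤ C) : l ∈ integrableExpSet X μ :=
  Integrable.of_bound (hX.const_mul l).exp.aestronglyMeasurable (Real.exp C)
    (ae_of_all _ fun ω ↦ by simpa [abs_of_pos (Real.exp_pos _)] using h ω)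

lemma zero_mem_interior_integrableExpSet {s t : ℝ} (hs : s < 0) (ht : 0 < t)
    (hsX : s ∈ integrableExpSet X μ) (htX : t ∈ integrableExpSet X μ) :
    0 ∈ interior (integrableExpSet X μ) :=
  interior_mono (fun _ (hl : _ ∈ Ioo s t) ↦ integrable_exp_mul_of_le_of_le hsX htX hl.1.le hl.2.le)
    (by rw [interior_Ioo]; exact ⟨hs, ht⟩)

lemma hasDerivAt_exp_mul_mgf_zero [IsProbabilityMeasure μ]
    (h : 0 ∈ interior (integrableExpSet X μ)) (c : ℝ) :
    HasDerivAt (fun l ↦ Real.exp (-l * c) * mgf X μ l) (μ[X] - c) 0 := by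
  have hexp : HasDerivAt (fun l : ℝ ↦ Real.exp (-l * c)) (-c) 0 := by
    simpa using ((hasDerivAt_neg (0 : ℝ)).mul_const c).exp
  exact (hexp.mul (hasDerivAt_mgf h)).congr_deriv (by simp; ring)

lemma exists_pos_exp_mul_mgf_lt_one [IsProbabilityMeasure μ]
    (h : 0 ∈ interior (integrableExpSet X μ)) {c : ℝ} (hc : μ[X] < c) :
    ∃ l, 0 < l ∧ l ∈ integrableExpSet X μ ∧ Real.exp (-l * c) * mgf X μ l < 1 := by
  have hslope := (hasDerivAt_exp_mul_mgf_zero h c).tendsto_slope_zero_right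
  have hint : ∀ᶠ l in 𝓝[>] (0 : ℝ), l ∈ integrableExpSet X μ :=
    nhdsWithin_le_nhds (mem_interior_iff_mem_nhds.1 h)
  obtain ⟨l, hneg, hl, hlpos⟩ :=
    ((hslope.eventually_lt_const (sub_neg.2 hc)).and (hint.and self_mem_nhdsWithin)).exists
  refine ⟨l, hlpos, hl, ?_⟩
  simpa [mgf_zero, smul_eq_mul, inv_mul_lt_iff₀ hlpos] using hneg

lemma exists_neg_exp_mul_mgf_lt_one [IsProbabilityMeasure μ]
    (h : 0 ∈ interior (integrableExpSet X μ)) {c : ℝ} (hc : c < μ[X]) :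
    ∃ l, l < 0 ∧ l ∈ integrableExpSet X μ ∧ Real.exp (-l * c) * mgf X μ l < 1 := by
  have hslope := (hasDerivAt_exp_mul_mgf_zero h c).tendsto_slope_zero_left
  have hint : ∀ᶠ l in 𝓝[<] (0 : ℝ), l ∈ integrableExpSet X μ :=
    nhdsWithin_le_nhds (mem_interior_iff_mem_nhds.1 h)
  obtain ⟨l, hpos, hl, hlneg⟩ :=
    ((hslope.eventually_const_lt (sub_pos.2 hc)).and (hint.and self_mem_nhdsWithin)).exists
  refine ⟨l, hlneg, hl, ?_⟩
  simp only [zero_add, neg_zero, zero_mul, Real.exp_zero, mgf_zero, one_mul, smul_eq_mul] at hpos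
  have := mul_neg_of_neg_of_pos hlneg hpos
  rwa [← mul_assoc, mul_inv_cancel₀ hlneg.ne, one_mul, sub_neg] at this

lemma integrable_exp_mul_finsetSum (hind : iIndepFun V μ) (hmeas : ∀ i, Measurable (V i))
    (hid : ∀ i, IdentDistrib (V i) (V j) μ μ) {l : ℝ} (hl : l ∈ integrableExpSet (V j) μ)
    (s : Finset ι) :
    Integrable (fun ω ↦ Real.exp (l * (∑ i ∈ s, V i) ω)) μ :=
  have := hind.isProbabilityMeasure
  hind.integrable_exp_mul_sum hmeas fun i _ ↦
    ((hid i).comp (measurable_const_mul l).exp).integrable_iff.2 hl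

lemma exp_mul_mgf_finsetSum (hind : iIndepFun V μ) (hmeas : ∀ i, Measurable (V i))
    (hid : ∀ i, IdentDistrib (V i) (V j) μ μ) (s : Finset ι) (l c : ℝ) :
    Real.exp (-l * (s.card * c)) * mgf (∑ i ∈ s, V i) μ l
      = (Real.exp (-l * c) * mgf (V j) μ l) ^ s.card := by
  rw [hind.mgf_sum hmeas, Finset.prod_congr rfl fun i _ ↦ mgf_congr_of_identDistrib _ _ (hid i) l,
    Finset.prod_const, mul_pow, ← Real.exp_nat_mul]
  ring_nf

lemma measureReal_card_mul_le_finsetSum_le (hind : iIndepFun V μ)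
    (hmeas : ∀ i, Measurable (V i)) (hid : ∀ i, IdentDistrib (V i) (V j) μ μ) {l : ℝ}
    (hl : 0 ≤ l) (hint : l ∈ integrableExpSet (V j) μ) (s : Finset ι) (c : ℝ) :
    μ.real {ω | s.card * c ≤ ∑ i ∈ s, V i ω} ≤ (Real.exp (-l * c) * mgf (V j) μ l) ^ s.card := by
  have := hind.isProbabilityMeasure
  rw [← exp_mul_mgf_finsetSum hind hmeas hid]
  simpa using measure_ge_le_exp_mul_mgf _ hl (integrable_exp_mul_finsetSum hind hmeas hid hint s)

lemma measureReal_finsetSum_le_card_mul_le (hind : iIndepFun V μ)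
    (hmeas : ∀ i, Measurable (V i)) (hid : ∀ i, IdentDistrib (V i) (V j) μ μ) {l : ℝ}
    (hl : l ≤ 0) (hint : l ∈ integrableExpSet (V j) μ) (s : Finset ι) (c : ℝ) :
    μ.real {ω | ∑ i ∈ s, V i ω ≤ s.card * c} ≤ (Real.exp (-l * c) * mgf (V j) μ l) ^ s.card := by
  have := hind.isProbabilityMeasure
  rw [← exp_mul_mgf_finsetSum hind hmeas hid]
  simpa using measure_le_le_exp_mul_mgf _ hl (integrable_exp_mul_finsetSum hind hmeas hid hint s)

lemma exists_rate_measureReal_abs_finsetSum_sub_ge (hind : iIndepFun V μ)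
    (hmeas : ∀ i, Measurable (V i)) (hid : ∀ i, IdentDistrib (V i) (V j) μ μ)
    (h0 : 0 ∈ interior (integrableExpSet (V j) μ)) {ε : ℝ} (hε : 0 < ε) :
    ∃ ρ, 0 < ρ ∧ ρ < 1 ∧ ∀ s : Finset ι,
      μ.real {ω | s.card * ε ≤ |∑ i ∈ s, V i ω - s.card * μ[V j]|} ≤ 2 * ρ ^ s.card := by
  have := hind.isProbabilityMeasure
  obtain ⟨l₁, hl₁, hint₁, hr₁⟩ := exists_pos_exp_mul_mgf_lt_one h0 (lt_add_of_pos_right _ hε)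
  obtain ⟨l₂, hl₂, hint₂, hr₂⟩ := exists_neg_exp_mul_mgf_lt_one h0 (sub_lt_self _ hε)
  set r₁ := Real.exp (-l₁ * (μ[V j] + ε)) * mgf (V j) μ l₁
  set r₂ := Real.exp (-l₂ * (μ[V j] - ε)) * mgf (V j) μ l₂
  have hr₁pos : 0 < r₁ := mul_pos (Real.exp_pos _) (mgf_pos hint₁)
  refine ⟨max r₁ r₂, lt_max_of_lt_left hr₁pos, max_lt hr₁ hr₂, fun s ↦ ?_⟩
  have hsub : {ω | s.card * ε ≤ |∑ i ∈ s, V i ω - s.card * μ[V j]|}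
      ⊆ {ω | s.card * (μ[V j] + ε) ≤ ∑ i ∈ s, V i ω}
        ∪ {ω | ∑ i ∈ s, V i ω ≤ s.card * (μ[V j] - ε)} := by
    intro ω (hω : (s.card : ℝ) * ε ≤ |_|)
    rcases le_abs'.1 hω with h | h
    · exact Or.inr (by simp only [mem_ofPred_eq]; linarith)
    · exact Or.inl (by simp only [mem_ofPred_eq]; linarith)
  have hpow : ∀ r, 0 ≤ r → r ≤ max r₁ r₂ → r ^ s.card ≤ max r₁ r₂ ^ s.card :=
    fun r hr hle ↦ pow_le_pow_left₀ hr hle _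
  calc _ ≤ r₁ ^ s.card + r₂ ^ s.card :=
        (measureReal_mono hsub).trans <| (measureReal_union_le _ _).trans <| add_le_add
          (measureReal_card_mul_le_finsetSum_le hind hmeas hid hl₁.le hint₁ s _)
          (measureReal_finsetSum_le_card_mul_le hind hmeas hid hl₂.le hint₂ s _)
    _ ≤ 2 * max r₁ r₂ ^ s.card := by
        linarith [hpow r₁ hr₁pos.le (le_max_left _ _),
          hpow r₂ (mul_nonneg (Real.exp_pos _).le mgf_nonneg) (le_max_right _ _)]

lemma exists_rate_measureReal_ratio_deviation {Y Z : ι → Ω → ℝ} {j : ι}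
    (hYind : iIndepFun Y μ) (hZind : iIndepFun Z μ)
    (hYm : ∀ i, Measurable (Y i)) (hZm : ∀ i, Measurable (Z i))
    (hYid : ∀ i, IdentDistrib (Y i) (Y j) μ μ) (hZid : ∀ i, IdentDistrib (Z i) (Z j) μ μ)
    (hY0 : 0 ∈ interior (integrableExpSet (Y j) μ))
    (hZ0 : 0 ∈ interior (integrableExpSet (Z j) μ))
    (hEZ : μ[Z j] ≠ 0) {δ : ℝ} (hδ : 0 < δ) :
    ∃ ρ, 0 < ρ ∧ ρ < 1 ∧ ∀ s : Finset ι,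
      μ.real {ω | δ < |(∑ i ∈ s, Y i ω) / (∑ i ∈ s, Z i ω) - μ[Y j] / μ[Z j]|}
        ≤ 4 * ρ ^ s.card := by
  have := hYind.isProbabilityMeasure
  obtain ⟨ε, hε, hcont⟩ := exists_pos_forall_abs_div_sub_div_lt (y₀ := μ[Y j]) hEZ hδ
  obtain ⟨ρY, hρY, hρY1, hY⟩ :=
    exists_rate_measureReal_abs_finsetSum_sub_ge hYind hYm hYid hY0 hε
  obtain ⟨ρZ, hρZ, hρZ1, hZ⟩ :=
    exists_rate_measureReal_abs_finsetSum_sub_ge hZind hZm hZid hZ0 hε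
  refine ⟨max ρY ρZ, lt_max_of_lt_left hρY, max_lt hρY1 hρZ1, fun s ↦ ?_⟩
  rcases s.eq_empty_or_nonempty with rfl | hs
  · calc _ ≤ 1 := measureReal_le_one
      _ ≤ _ := by norm_num
  have hm : (0 : ℝ) < s.card := by exact_mod_cast hs.card_pos
  have hsub : {ω | δ < |(∑ i ∈ s, Y i ω) / (∑ i ∈ s, Z i ω) - μ[Y j] / μ[Z j]|}
      ⊆ {ω | s.card * ε ≤ |∑ i ∈ s, Y i ω - s.card * μ[Y j]|}
        ∪ {ω | s.card * ε ≤ |∑ i ∈ s, Z i ω - s.card * μ[Z j]|} := by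
    intro ω (hω : δ < _)
    by_contra hnot
    simp only [mem_union, mem_ofPred_eq, not_or, not_le] at hnot
    have hmean : ∀ x e : ℝ, |x - s.card * e| < s.card * ε → |x / s.card - e| < ε := by
      intro x e hx
      rwa [← mul_lt_mul_iff_of_pos_left hm, ← abs_of_pos hm, ← abs_mul, abs_of_pos hm,
        mul_sub, mul_div_cancel₀ _ hm.ne']
    have := hcont _ _ (hmean _ _ hnot.1) (hmean _ _ hnot.2)
    rw [div_div_div_cancel_right₀ hm.ne'] at this
    linarith
  have hpow : ∀ ρ, 0 < ρ → ρ ≤ max ρY ρZ → ρ ^ s.card ≤ max ρY ρZ ^ s.card :=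
    fun ρ hρ hle ↦ pow_le_pow_left₀ hρ.le hle _
  calc _ ≤ 2 * ρY ^ s.card + 2 * ρZ ^ s.card :=
        (measureReal_mono hsub).trans <| (measureReal_union_le _ _).trans <|
          add_le_add (hY s) (hZ s)
    _ ≤ 4 * max ρY ρZ ^ s.card := by
        linarith [hpow ρY hρY (le_max_left _ _), hpow ρZ hρZ (le_max_right _ _)]

theorem measure_infinite_ratio_deviations_eq_zero {Y Z : ℕ → Ω → ℝ} {j : ℕ}
    (hYind : iIndepFun Y μ) (hZind : iIndepFun Z μ)
    (hYm : ∀ n, Measurable (Y n)) (hZm : ∀ n, Measurable (Z n))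
    (hYid : ∀ n, IdentDistrib (Y n) (Y j) μ μ) (hZid : ∀ n, IdentDistrib (Z n) (Z j) μ μ)
    (hY0 : 0 ∈ interior (integrableExpSet (Y j) μ))
    (hZ0 : 0 ∈ interior (integrableExpSet (Z j) μ))
    (hEZ : μ[Z j] ≠ 0) {A B : ℝ} (hA : Real.log A ≠ 0) (hB : Real.log B ≠ 0)
    {δ : ℝ} (hδ : 0 < δ) :
    ∃ h₀ > (0 : ℝ), ∀ h : ℝ, h₀ ≤ h →
      μ {ω | {N : ℕ | ∃ m : ℕ, zetaNH A B (fun _ ↦ h) N ≤ (m : ℝ) ∧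
        δ < |(∑ n ∈ Finset.Icc (N + 1) (N + m), Y n ω) /
              (∑ n ∈ Finset.Icc (N + 1) (N + m), Z n ω) - μ[Y j] / μ[Z j]|}.Infinite} = 0 := by
  have := hYind.isProbabilityMeasure
  obtain ⟨ρ, hρ0, hρ1, hρ⟩ :=
    exists_rate_measureReal_ratio_deviation hYind hZind hYm hZm hYid hZid hY0 hZ0 hEZ hδ
  have hlogρ : 0 < -Real.log ρ := neg_pos.2 (Real.log_neg hρ0 hρ1)
  refine ⟨2 * |Real.log A| / -Real.log ρ, by positivity, fun h hh ↦ ?_⟩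
  have hN : ∀ N : ℕ, μ {ω | ∃ m : ℕ, zetaNH A B (fun _ ↦ h) N ≤ (m : ℝ) ∧
      δ < |(∑ n ∈ Finset.Icc (N + 1) (N + m), Y n ω) /
            (∑ n ∈ Finset.Icc (N + 1) (N + m), Z n ω) - μ[Y j] / μ[Z j]|}
      ≤ ENNReal.ofReal (4 * ρ ^ ⌈zetaNH A B (fun _ ↦ h) N⌉₊ * (1 - ρ)⁻¹) := fun N ↦
    measure_exists_ge_le (E := fun m ↦ {ω | δ < |(∑ n ∈ Finset.Icc (N + 1) (N + m), Y n ω) /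
        (∑ n ∈ Finset.Icc (N + 1) (N + m), Z n ω) - μ[Y j] / μ[Z j]|}) (by norm_num) hρ0.le hρ1
      (fun m ↦ by simpa using hρ (Finset.Icc (N + 1) (N + m))) _
  have hsum : Summable fun N : ℕ ↦ 4 * ρ ^ ⌈zetaNH A B (fun _ ↦ h) N⌉₊ * (1 - ρ)⁻¹ :=
    ((summable_pow_ceil_zetaNH hA hB hρ0 hρ1 hh).mul_left 4).mul_right _
  have hfin := (ENNReal.tsum_le_tsum hN).trans_lt
    ((ENNReal.ofReal_tsum_of_nonneg (fun N ↦ by positivity) hsum).symm ▸ ENNReal.ofReal_lt_top)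
  simpa only [Nat.frequently_atTop_iff_infinite] using
    measure_setOfPred_frequently_eq_zero hfin.ne

end ProbabilityTheory

section ChildChoice

/-- For a step `w = ((a, b), p)` of the construction, `c w` says that the left child (scaling
ratio `a`, mass `p`) is chosen; `logMassOfChoice c w` and `logRatioOfChoice c w` are the logarithms
of the mass and of the scaling ratio of the chosen child. -/
def logMassOfChoice (c : (ℝ × ℝ) × ℝ → Prop) [DecidablePred c] (w : (ℝ × ℝ) × ℝ) : ℝ :=
  if c w then Real.log w.2 else Real.log (1 - w.2)

def logRatioOfChoice (c : (ℝ × ℝ) × ℝ → Prop) [DecidablePred c] (w : (ℝ × ℝ) × ℝ) : ℝ :=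
  if c w then Real.log w.1.1 else Real.log w.1.2

variable {c : (ℝ × ℝ) × ℝ → Prop} [DecidablePred c]

lemma measurable_logMassOfChoice (hc : MeasurableSet {w | c w}) :
    Measurable (logMassOfChoice c) :=
  Measurable.ite hc (by fun_prop) (by fun_prop)

lemma measurable_logRatioOfChoice (hc : MeasurableSet {w | c w}) :
    Measurable (logRatioOfChoice c) :=
  Measurable.ite hc (by fun_prop) (by fun_prop)

lemma logMassOfChoice_nonpos {w : (ℝ × ℝ) × ℝ} (hw : w.2 ∈ Icc (0 : ℝ) 1) :
    logMassOfChoice c w ≤ 0 := by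
  unfold logMassOfChoice
  split_ifs
  · exact Real.log_nonpos hw.1 hw.2
  · exact Real.log_nonpos (sub_nonneg.2 hw.2) (sub_le_self _ hw.1)

lemma exp_neg_mul_logMassOfChoice_le {w : (ℝ × ℝ) × ℝ} (hw : w.2 ∈ Icc (0 : ℝ) 1) {t : ℝ}
    (ht : t ≠ 0) :
    Real.exp (-t * logMassOfChoice c w) ≤ w.2 ^ (-t) + (1 - w.2) ^ (-t) := by
  unfold logMassOfChoice
  split_ifs
  · exact Real.exp_neg_mul_log_le_rpow_add hw ht
  · rw [add_comm]
    simpa using Real.exp_neg_mul_log_le_rpow_add (x := 1 - w.2)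
      ⟨sub_nonneg.2 hw.2, sub_le_self _ hw.1⟩ ht

lemma log_le_logRatioOfChoice {A : ℝ} (hA : 0 < A) {w : (ℝ × ℝ) × ℝ}
    (hw : A ≤ min w.1.1 w.1.2) : Real.log A ≤ logRatioOfChoice c w := by
  unfold logRatioOfChoice
  split_ifs
  · exact Real.log_le_log hA (hw.trans (min_le_left _ _))
  · exact Real.log_le_log hA (hw.trans (min_le_right _ _))

lemma logRatioOfChoice_le_log {A B : ℝ} (hA : 0 < A) {w : (ℝ × ℝ) × ℝ}
    (hw : A ≤ min w.1.1 w.1.2 ∧ w.1.1 + w.1.2 ≤ B) : logRatioOfChoice c w ≤ Real.log B := by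
  obtain ⟨hmin, hsum⟩ := hw
  have ha := hmin.trans (min_le_left _ _)
  have hb := hmin.trans (min_le_right _ _)
  unfold logRatioOfChoice
  split_ifs
  · exact Real.log_le_log (hA.trans_le ha) (by linarith)
  · exact Real.log_le_log (hA.trans_le hb) (by linarith)

end ChildChoice

namespace MoranSystem

open ProbabilityTheory

variable {Ω : Type*} [MeasurableSpace Ω] {P : Measure Ω} {A B : ℝ}

def step (S : MoranSystem Ω P A B) (n : ℕ) (ω : Ω) : (ℝ × ℝ) × ℝ :=
  ((S.a ω n, S.b ω n), S.p ω n)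

variable (S : MoranSystem Ω P A B)

lemma measurable_step (n : ℕ) : Measurable (S.step n) :=
  (S.meas_ab n).prodMk (S.meas_p n)

lemma iIndepFun_step : iIndepFun S.step P :=
  iIndepFun.prodMk_of_indepFun S.meas_ab S.meas_p S.indep_ab S.indep_p S.indep_ab_p

lemma identDistrib_step [IsProbabilityMeasure P] (n : ℕ) : IdentDistrib (S.step n) (S.step 1) P P :=
  have hindep : ∀ k, IndepFun (fun ω ↦ (S.a ω k, S.b ω k)) (fun ω ↦ S.p ω k) P :=
    fun k ↦ S.indep_ab_p.comp (measurable_pi_apply k) (measurable_pi_apply k)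
  (S.ident_ab n).prodMk (S.ident_p n) (hindep n) (hindep 1)

theorem measure_infinite_deviations_eq_zero [IsProbabilityMeasure P]
    (hA : 0 < A) (hAB : A < B) (hB1 : B < 1)
    {c : (ℝ × ℝ) × ℝ → Prop} [DecidablePred c] (hc : MeasurableSet {w | c w})
    {δ : ℝ} (hδ : 0 < δ) :
    ∃ h₀ > (0 : ℝ), ∀ h : ℝ, h₀ ≤ h →
      P {ω | {N : ℕ | ∃ m : ℕ, zetaNH A B (fun _ ↦ h) N ≤ (m : ℝ) ∧
        δ < |(∑ n ∈ Finset.Icc (N + 1) (N + m), logMassOfChoice c (S.step n ω)) /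
              (∑ n ∈ Finset.Icc (N + 1) (N + m), logRatioOfChoice c (S.step n ω)) -
            (∫ ω, logMassOfChoice c (S.step 1 ω) ∂P) /
              (∫ ω, logRatioOfChoice c (S.step 1 ω) ∂P)|}.Infinite} = 0 := by
  have hY := measurable_logMassOfChoice hc
  have hZ := measurable_logRatioOfChoice hc
  have hYm : ∀ n, Measurable fun ω ↦ logMassOfChoice c (S.step n ω) :=
    fun n ↦ hY.comp (S.measurable_step n)
  have hZm : ∀ n, Measurable fun ω ↦ logRatioOfChoice c (S.step n ω) :=
    fun n ↦ hZ.comp (S.measurable_step n)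
  have hlogB : Real.log B < 0 := Real.log_neg (hA.trans hAB) hB1
  have hZle : ∀ n ω, logRatioOfChoice c (S.step n ω) ≤ Real.log B :=
    fun n ω ↦ logRatioOfChoice_le_log (w := S.step n ω) hA (S.range_ab ω n)
  obtain ⟨t, ht, -, -, hpt, hqt⟩ := S.moment
  have hY0 : 0 ∈ interior (integrableExpSet (fun ω ↦ logMassOfChoice c (S.step 1 ω)) P) := by
    refine zero_mem_interior_integrableExpSet (neg_neg_of_pos ht) one_pos ?_
      (mem_integrableExpSet_of_mul_le (C := 0) (hYm 1) fun ω ↦ ?_)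
    · refine (hpt.add hqt).mono' (hYm 1 |>.const_mul _).exp.aestronglyMeasurable
        (ae_of_all _ fun ω ↦ ?_)
      rw [Real.norm_of_nonneg (Real.exp_pos _).le]
      exact exp_neg_mul_logMassOfChoice_le (w := S.step 1 ω) (S.range_p ω 1) ht.ne'
    · simpa using logMassOfChoice_nonpos (w := S.step 1 ω) (S.range_p ω 1)
  have hZ0 : 0 ∈ interior (integrableExpSet (fun ω ↦ logRatioOfChoice c (S.step 1 ω)) P) :=
    zero_mem_interior_integrableExpSet neg_one_lt_zero one_pos
      (mem_integrableExpSet_of_mul_le (C := -Real.log A) (hZm 1) fun ω ↦ by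
        simpa using log_le_logRatioOfChoice (c := c) (w := S.step 1 ω) hA (S.range_ab ω 1).1)
      (mem_integrableExpSet_of_mul_le (hZm 1) fun ω ↦ by simpa using hZle 1 ω)
  have hEZ : (∫ ω, logRatioOfChoice c (S.step 1 ω) ∂P) < 0 :=
    ((integral_mono (integrable_of_mem_interior_integrableExpSet hZ0) (integrable_const _)
      (hZle 1)).trans_eq (by simp)).trans_lt hlogB
  exact measure_infinite_ratio_deviations_eq_zero
    (S.iIndepFun_step.comp (fun _ ↦ logMassOfChoice c) fun _ ↦ hY)
    (S.iIndepFun_step.comp (fun _ ↦ logRatioOfChoice c) fun _ ↦ hZ) hYm hZm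
    (fun n ↦ (S.identDistrib_step n).comp hY) (fun n ↦ (S.identDistrib_step n).comp hZ)
    hY0 hZ0 hEZ.ne (Real.log_neg hA (hAB.trans hB1)).ne hlogB.ne hδ

end MoranSystem

theorem probabilistic_result_general {Ω : Type*} [MeasurableSpace Ω] (P : Measure Ω) [IsProbabilityMeasure P]
    (A B : ℝ) (hA : 0 < A) (hAB : A < B) (hB1 : B < 1)
    (S : MoranSystem Ω P A B)
    (θ δ : ℝ) (hδ : 0 < δ) :
    ∃ h₀ > (0:ℝ), ∀ h : ℝ, h₀ ≤ h →
      P {ω | {N : ℕ | ∃ m : ℕ, zetaNH A B (fun _ => h) N ≤ (m : ℝ) ∧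
        δ < |(∑ n ∈ Finset.Icc (N + 1) (N + m), Yrv S.a S.b S.p θ n ω) /
              (∑ n ∈ Finset.Icc (N + 1) (N + m), Zrv S.a S.b S.p θ n ω) -
            Gfn P S.a S.b S.p θ|}.Infinite} = 0 ∧
      P {ω | {N : ℕ | ∃ m : ℕ, zetaNH A B (fun _ => h) N ≤ (m : ℝ) ∧
        δ < |(∑ n ∈ Finset.Icc (N + 1) (N + m), Yrv' S.a S.b S.p θ n ω) /
              (∑ n ∈ Finset.Icc (N + 1) (N + m), Zrv' S.a S.b S.p θ n ω) -
            Gfn' P S.a S.b S.p θ|}.Infinite} = 0 := by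
  -- `Yrv`, `Zrv` are the choice `p ≤ r` and `Yrv'`, `Zrv'` the choice `r ≤ p`, where
  -- `r = a ^ θ / (a ^ θ + b ^ θ)`.
  have hratio : Measurable fun w : (ℝ × ℝ) × ℝ ↦ w.1.1 ^ θ / (w.1.1 ^ θ + w.1.2 ^ θ) := by
    fun_prop
  obtain ⟨h₁, hh₁, H₁⟩ := S.measure_infinite_deviations_eq_zero hA hAB hB1
    (measurableSet_le measurable_snd hratio) hδ
  obtain ⟨h₂, hh₂, H₂⟩ := S.measure_infinite_deviations_eq_zero hA hAB hB1
    (measurableSet_le hratio measurable_snd) hδ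
  exact ⟨max h₁ h₂, lt_max_of_lt_left hh₁, fun h hh ↦
    ⟨H₁ h ((le_max_left _ _).trans hh), H₂ h ((le_max_right _ _).trans hh)⟩⟩

/-- Lemma 5, Probabilistic Result: for fixed `θ ≥ 0`, `δ > 0` there
is `h₀ > 0` such that for any constant function `H ≥ h₀`, almost surely only finitely
many `N` admit an `m ≥ ζ_N^H` for which the ratio of partial sums of the `Yₙ(θ)` and
`Zₙ(θ)` deviates from `E(Y₁(θ))/E(Z₁(θ))` by more than `δ`; similarly for the primed
variables. -/
theorem probabilistic_result {Ω : Type*} [MeasurableSpace Ω] (P : Measure Ω) [IsProbabilityMeasure P]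
    (A B : ℝ) (hA : 0 < A) (hAB : A < B) (hB1 : B < 1)
    (S : MoranSystem Ω P A B)
    (θ δ : ℝ) (hθ : 0 ≤ θ) (hδ : 0 < δ) :
    ∃ h₀ > (0:ℝ), ∀ h : ℝ, h₀ ≤ h →
      P {ω | {N : ℕ | ∃ m : ℕ, zetaNH A B (fun _ => h) N ≤ (m : ℝ) ∧
        δ < |(∑ n ∈ Finset.Icc (N + 1) (N + m), Yrv S.a S.b S.p θ n ω) /
              (∑ n ∈ Finset.Icc (N + 1) (N + m), Zrv S.a S.b S.p θ n ω) -
            Gfn P S.a S.b S.p θ|}.Infinite} = 0 ∧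
      P {ω | {N : ℕ | ∃ m : ℕ, zetaNH A B (fun _ => h) N ≤ (m : ℝ) ∧
        δ < |(∑ n ∈ Finset.Icc (N + 1) (N + m), Yrv' S.a S.b S.p θ n ω) /
              (∑ n ∈ Finset.Icc (N + 1) (N + m), Zrv' S.a S.b S.p θ n ω) -
            Gfn' P S.a S.b S.p θ|}.Infinite} = 0 :=
  probabilistic_result_general P A B hA hAB hB1 S θ δ hδ
end
end

section
/- Suppose ψ > 0 satisfies G(ψ) ≥ ψ. Then there is a set Γ_ψ ⊆ Ω of full P-measure such that dim̄_Φ μ_ω ≥ ψ for every large dimension function Φ and every ω ∈ Γ_ψ. -/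
open MeasureTheory ProbabilityTheory Filter Set Metric
open scoped ENNReal NNReal

noncomputable section

namespace MoranProof

open scoped Topology

def leftAux (a b : ℕ → ℝ) : ℕ → ℝ → ℝ → List Bool → ℝ
  | _, l, _, [] => l
  | n, l, len, c :: v =>
    if c then leftAux a b (n + 1) (l + len - b (n + 1) * len) (b (n + 1) * len) v
    else leftAux a b (n + 1) l (a (n + 1) * len) v

variable (a b p : ℕ → ℝ)

lemma moranLenAux_append : ∀ (v w : List Bool) (k : ℕ) (len : ℝ),
    moranLenAux a b k len (v ++ w)
      = moranLenAux a b (k + v.length) (moranLenAux a b k len v) w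
  | [], w, k, len => by simp [moranLenAux]
  | c :: v, w, k, len => by
    have h : k + (c :: v).length = (k + 1) + v.length := by simp; omega
    rw [h]
    simp only [List.cons_append, moranLenAux]
    exact moranLenAux_append v w _ _

lemma moranMassAux_append : ∀ (v w : List Bool) (k : ℕ) (m : ℝ),
    moranMassAux p k m (v ++ w)
      = moranMassAux p (k + v.length) (moranMassAux p k m v) w
  | [], w, k, m => by simp [moranMassAux]
  | c :: v, w, k, m => by
    have h : k + (c :: v).length = (k + 1) + v.length := by simp; omega
    rw [h]
    simp only [List.cons_append, moranMassAux]
    exact moranMassAux_append v w _ _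

lemma leftAux_append : ∀ (v w : List Bool) (k : ℕ) (l len : ℝ),
    leftAux a b k l len (v ++ w)
      = leftAux a b (k + v.length) (leftAux a b k l len v) (moranLenAux a b k len v) w
  | [], w, k, l, len => by simp [leftAux, moranLenAux]
  | c :: v, w, k, l, len => by
    have h : k + (c :: v).length = (k + 1) + v.length := by simp; omega
    rw [h]
    by_cases hc : c = true
    · subst hc
      simp only [List.cons_append, leftAux, moranLenAux, if_true]
      exact leftAux_append v w _ _ _
    · simp only [Bool.not_eq_true] at hc; subst hc
      simp only [List.cons_append, leftAux, moranLenAux, if_false, Bool.false_eq_true]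
      exact leftAux_append v w _ _ _

lemma moranAux_eq : ∀ (v : List Bool) (k : ℕ) (l len : ℝ),
    moranAux a b k l len v
      = Set.Icc (leftAux a b k l len v) (leftAux a b k l len v + moranLenAux a b k len v)
  | [], k, l, len => by simp [moranAux, leftAux, moranLenAux]
  | c :: v, k, l, len => by
    by_cases hc : c = true
    · subst hc
      simp only [moranAux, leftAux, moranLenAux, if_true]
      exact moranAux_eq v _ _ _
    · simp only [Bool.not_eq_true] at hc; subst hc
      simp only [moranAux, leftAux, moranLenAux, if_false, Bool.false_eq_true]
      exact moranAux_eq v _ _ _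


variable {A B : ℝ}

lemma moranLenAux_pos (hA : 0 < A) (ha : ∀ n, A ≤ a n) (hb : ∀ n, A ≤ b n) :
    ∀ (v : List Bool) (k : ℕ) (len : ℝ), 0 < len → 0 < moranLenAux a b k len v := by
  intro v
  induction v with
  | nil => intro k len h; exact h
  | cons c v ih =>
    intro k len h
    simp only [moranLenAux]
    refine ih _ _ (mul_pos (lt_of_lt_of_le hA ?_) h)
    cases c <;> simp [ha, hb]

lemma moranLenAux_le_self (ha1 : ∀ n, 0 ≤ a n) (hb1 : ∀ n, 0 ≤ b n)
    (ha2 : ∀ n, a n ≤ 1) (hb2 : ∀ n, b n ≤ 1) :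
    ∀ (v : List Bool) (k : ℕ) (len : ℝ), 0 ≤ len → moranLenAux a b k len v ≤ len := by
  intro v
  induction v with
  | nil => intro k len _; exact le_rfl
  | cons c v ih =>
    intro k len h
    simp only [moranLenAux]
    have hf0 : 0 ≤ (if c then b (k+1) else a (k+1)) := by cases c <;> simp [ha1, hb1]
    have hf1 : (if c then b (k+1) else a (k+1)) ≤ 1 := by cases c <;> simp [ha2, hb2]
    refine le_trans (ih _ _ (mul_nonneg hf0 h)) ?_
    nlinarith

lemma moranAux_subset (ha1 : ∀ n, 0 ≤ a n) (hb1 : ∀ n, 0 ≤ b n)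
    (hab1 : ∀ n, a n + b n ≤ 1) :
    ∀ (v : List Bool) (k : ℕ) (l len : ℝ), 0 ≤ len →
      moranAux a b k l len v ⊆ Set.Icc l (l + len) := by
  intro v
  induction v with
  | nil => intro k l len _; simp [moranAux]
  | cons c v ih =>
    intro k l len h
    by_cases hc : c = true
    · subst hc
      simp only [moranAux, if_true]
      refine (ih _ _ _ (mul_nonneg (hb1 _) h)).trans (Set.Icc_subset_Icc ?_ ?_)
      · nlinarith [hb1 (k+1), hab1 (k+1), ha1 (k+1)]
      · nlinarith [hb1 (k+1), hab1 (k+1), ha1 (k+1)]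
    · simp only [Bool.not_eq_true] at hc; subst hc
      simp only [moranAux, Bool.false_eq_true, if_false]
      refine (ih _ _ _ (mul_nonneg (ha1 _) h)).trans (Set.Icc_subset_Icc le_rfl ?_)
      nlinarith [hb1 (k+1), hab1 (k+1), ha1 (k+1)]

lemma moran_sep (hA : 0 < A) (hB1 : B < 1) (ha : ∀ n, A ≤ a n) (hb : ∀ n, A ≤ b n)
    (hsum : ∀ n, a n + b n ≤ B) :
    ∀ (v w : List Bool), v.length = w.length → v ≠ w →
    ∀ (k : ℕ) (l len : ℝ), 0 < len → ∀ y ∈ moranAux a b k l len v, ∀ z ∈ moranAux a b k l len w,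
    (1 - B) * moranLenAux a b k len v.dropLast ≤ |y - z| := by
  have ha1 : ∀ n, 0 ≤ a n := fun n => le_trans hA.le (ha n)
  have hb1 : ∀ n, 0 ≤ b n := fun n => le_trans hA.le (hb n)
  have ha2 : ∀ n, a n ≤ 1 := fun n => by nlinarith [hsum n, hb1 n]
  have hb2 : ∀ n, b n ≤ 1 := fun n => by nlinarith [hsum n, ha1 n]
  have hab1 : ∀ n, a n + b n ≤ 1 := fun n => (hsum n).trans hB1.le
  intro v
  induction v with
  | nil =>
    intro w hlen hne
    cases w with
    | nil => exact absurd rfl hne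
    | cons d w' => simp at hlen
  | cons c v ih =>
    intro w hlen hne k l len hpos y hy z hz
    cases w with
    | nil => simp at hlen
    | cons d w' =>
      simp only [List.length_cons, Nat.add_right_cancel_iff] at hlen
      rcases eq_or_ne c d with rfl | hcd
      · have hvw' : v ≠ w' := fun h => hne (by rw [h])
        obtain ⟨e, v'', rfl⟩ : ∃ e v'', v = e :: v'' := by
          cases v with
          | nil =>
            cases w' with
            | nil => exact absurd rfl hvw'
            | cons _ _ => simp at hlen
          | cons e v'' => exact ⟨e, v'', rfl⟩
        rw [List.dropLast_cons₂]
        cases c with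
        | true =>
          simp only [moranAux, moranLenAux, if_true] at hy hz ⊢
          exact ih _ hlen hvw' _ _ _ (mul_pos (lt_of_lt_of_le hA (hb _)) hpos) y hy z hz
        | false =>
          simp only [moranAux, moranLenAux, Bool.false_eq_true, if_false] at hy hz ⊢
          exact ih _ hlen hvw' _ _ _ (mul_pos (lt_of_lt_of_le hA (ha _)) hpos) y hy z hz
      · have hdrop : moranLenAux a b k len ((c :: v).dropLast) ≤ len :=
          moranLenAux_le_self a b ha1 hb1 ha2 hb2 _ _ _ hpos.le
        have h1B : (0:ℝ) ≤ 1 - B := by nlinarith [hsum 0, ha1 0, hb1 0]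
        have hstep : (1 - B) * moranLenAux a b k len ((c :: v).dropLast) ≤ (1 - B) * len :=
          mul_le_mul_of_nonneg_left hdrop h1B
        have hgap : (1 - B) * len ≤ (1 - a (k+1) - b (k+1)) * len := by
          nlinarith [hsum (k+1)]
        cases c with
        | true =>
          have hd : d = false := by revert hcd; cases d <;> simp
          subst hd
          simp only [moranAux, if_true, Bool.false_eq_true, if_false] at hy hz
          have hy' := moranAux_subset a b ha1 hb1 hab1 _ _ _ _
            (mul_nonneg (hb1 _) hpos.le) hy
          have hz' := moranAux_subset a b ha1 hb1 hab1 _ _ _ _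
            (mul_nonneg (ha1 _) hpos.le) hz
          simp only [Set.mem_Icc] at hy' hz'
          have h2 : (1 - B) * len ≤ y - z := by nlinarith [hy'.1, hz'.2]
          exact le_trans (le_trans hstep h2) (le_abs_self _)
        | false =>
          have hd : d = true := by revert hcd; cases d <;> simp
          subst hd
          simp only [moranAux, if_true, Bool.false_eq_true, if_false] at hy hz
          have hy' := moranAux_subset a b ha1 hb1 hab1 _ _ _ _
            (mul_nonneg (ha1 _) hpos.le) hy
          have hz' := moranAux_subset a b ha1 hb1 hab1 _ _ _ _
            (mul_nonneg (hb1 _) hpos.le) hz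
          simp only [Set.mem_Icc] at hy' hz'
          have h2 : (1 - B) * len ≤ z - y := by nlinarith [hz'.1, hy'.2]
          exact le_trans (le_trans hstep h2) ((abs_sub_comm y z) ▸ le_abs_self (z - y))


lemma measSupport_compl_null (μ : Measure ℝ) : μ (measSupport μ)ᶜ = 0 := by
  classical
  set U := (measSupport μ)ᶜ with hU
  have hex : ∀ x : U, ∃ r : ℝ, 0 < r ∧ μ (ball (x:ℝ) r) = 0 := by
    rintro ⟨x, hx⟩
    simp only [hU, Set.mem_compl_iff, measSupport, Set.mem_setOf_eq] at hx
    push_neg at hx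
    obtain ⟨r, hr, h0⟩ := hx
    exact ⟨r, hr, le_antisymm h0 zero_le⟩
  choose r hr h0 using hex
  obtain ⟨T, hTc, hTU⟩ := TopologicalSpace.isOpen_iUnion_countable
    (fun x : U => ball (x:ℝ) (r x)) (fun _ => isOpen_ball)
  have hcover : U ⊆ ⋃ x ∈ T, ball (x:ℝ) (r x) := by
    intro x hx
    rw [hTU]
    exact Set.mem_iUnion.2 ⟨⟨x, hx⟩, mem_ball_self (hr ⟨x, hx⟩)⟩
  refine le_antisymm ?_ zero_le
  calc μ U ≤ μ (⋃ x ∈ T, ball (x:ℝ) (r x)) := measure_mono hcover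
    _ = 0 := (measure_biUnion_null_iff hTc).2 (fun i _ => h0 i)

section Indep

variable {Ω : Type*} [MeasurableSpace Ω] {P : Measure Ω} [IsProbabilityMeasure P]
variable {α β γ δ : Type*} [MeasurableSpace α] [MeasurableSpace β]
  [MeasurableSpace γ] [MeasurableSpace δ]

lemma map_prodProdProd (μ1 : Measure α) (μ2 : Measure β) (ν1 : Measure γ) (ν2 : Measure δ)
    [IsProbabilityMeasure μ1] [IsProbabilityMeasure μ2] [IsProbabilityMeasure ν1]
    [IsProbabilityMeasure ν2] :
    ((μ1.prod μ2).prod (ν1.prod ν2)).map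
        (fun q : (α × β) × γ × δ => ((q.1.1, q.2.1), (q.1.2, q.2.2)))
      = (μ1.prod ν1).prod (μ2.prod ν2) := by
  have e1 := measurePreserving_prodAssoc μ1 μ2 (ν1.prod ν2)
  have e2 := (MeasurePreserving.id μ1).prod
    (MeasurePreserving.symm MeasurableEquiv.prodAssoc (measurePreserving_prodAssoc μ2 ν1 ν2))
  have e3 := (MeasurePreserving.id μ1).prod
    ((Measure.measurePreserving_swap (μ := μ2) (ν := ν1)).prod (MeasurePreserving.id ν2))
  have e4 := (MeasurePreserving.id μ1).prod (measurePreserving_prodAssoc ν1 μ2 ν2)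
  have e5 := MeasurePreserving.symm MeasurableEquiv.prodAssoc
    (measurePreserving_prodAssoc μ1 ν1 (μ2.prod ν2))
  have total := e5.comp (e4.comp (e3.comp (e2.comp e1)))
  have hfun : (fun q : (α × β) × γ × δ => ((q.1.1, q.2.1), (q.1.2, q.2.2)))
      = (⇑(MeasurableEquiv.prodAssoc (α := α) (β := γ) (γ := β × δ)).symm
          ∘ (Prod.map id ⇑(MeasurableEquiv.prodAssoc (α := γ) (β := β) (γ := δ))
          ∘ (Prod.map id (Prod.map Prod.swap id)
          ∘ (Prod.map id ⇑(MeasurableEquiv.prodAssoc (α := β) (β := γ) (γ := δ)).symm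
          ∘ ⇑(MeasurableEquiv.prodAssoc (α := α) (β := β) (γ := γ × δ)))))) := by
    funext q
    obtain ⟨⟨x1, x2⟩, ⟨w1, w2⟩⟩ := q
    rfl
  rw [hfun]
  exact total.map_eq

lemma indepFun_pair_pair {X1 : Ω → α} {X2 : Ω → β} {W1 : Ω → γ} {W2 : Ω → δ}
    (mX1 : Measurable X1) (mX2 : Measurable X2) (mW1 : Measurable W1) (mW2 : Measurable W2)
    (hX : IndepFun X1 X2 P) (hW : IndepFun W1 W2 P)
    (hXW : IndepFun (fun ω => (X1 ω, X2 ω)) (fun ω => (W1 ω, W2 ω)) P) :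
    IndepFun (fun ω => (X1 ω, W1 ω)) (fun ω => (X2 ω, W2 ω)) P := by
  have h1 : IndepFun X1 W1 P := hXW.comp measurable_fst measurable_fst
  have h2 : IndepFun X2 W2 P := hXW.comp measurable_snd measurable_snd
  rw [indepFun_iff_map_prod_eq_prod_map_map (mX1.prodMk mW1).aemeasurable
    (mX2.prodMk mW2).aemeasurable]
  rw [indepFun_iff_map_prod_eq_prod_map_map mX1.aemeasurable mX2.aemeasurable] at hX
  rw [indepFun_iff_map_prod_eq_prod_map_map mW1.aemeasurable mW2.aemeasurable] at hW
  rw [indepFun_iff_map_prod_eq_prod_map_map (mX1.prodMk mX2).aemeasurable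
    (mW1.prodMk mW2).aemeasurable] at hXW
  rw [indepFun_iff_map_prod_eq_prod_map_map mX1.aemeasurable mW1.aemeasurable] at h1
  rw [indepFun_iff_map_prod_eq_prod_map_map mX2.aemeasurable mW2.aemeasurable] at h2
  haveI : IsProbabilityMeasure (P.map X1) := Measure.isProbabilityMeasure_map mX1.aemeasurable
  haveI : IsProbabilityMeasure (P.map X2) := Measure.isProbabilityMeasure_map mX2.aemeasurable
  haveI : IsProbabilityMeasure (P.map W1) := Measure.isProbabilityMeasure_map mW1.aemeasurable
  haveI : IsProbabilityMeasure (P.map W2) := Measure.isProbabilityMeasure_map mW2.aemeasurable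
  have hT : Measurable (fun q : (α × β) × γ × δ => ((q.1.1, q.2.1), (q.1.2, q.2.2))) :=
    (measurable_fst.fst.prodMk measurable_snd.fst).prodMk
      (measurable_fst.snd.prodMk measurable_snd.snd)
  have hpair : Measurable (fun ω => ((X1 ω, X2 ω), (W1 ω, W2 ω))) :=
    (mX1.prodMk mX2).prodMk (mW1.prodMk mW2)
  have hcomp : (fun ω => ((X1 ω, W1 ω), (X2 ω, W2 ω)))
      = (fun q : (α × β) × γ × δ => ((q.1.1, q.2.1), (q.1.2, q.2.2)))
        ∘ (fun ω => ((X1 ω, X2 ω), (W1 ω, W2 ω))) := rfl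
  rw [hcomp, ← Measure.map_map hT hpair, hXW, hX, hW, map_prodProdProd, ← h1, ← h2]

lemma identDistrib_pair {f1 f2 : Ω → α} {g1 g2 : Ω → γ}
    (mf1 : Measurable f1) (mf2 : Measurable f2) (mg1 : Measurable g1) (mg2 : Measurable g2)
    (hf : IdentDistrib f1 f2 P P) (hg : IdentDistrib g1 g2 P P)
    (h1 : IndepFun f1 g1 P) (h2 : IndepFun f2 g2 P) :
    IdentDistrib (fun ω => (f1 ω, g1 ω)) (fun ω => (f2 ω, g2 ω)) P P := by
  refine ⟨(mf1.prodMk mg1).aemeasurable, (mf2.prodMk mg2).aemeasurable, ?_⟩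
  rw [indepFun_iff_map_prod_eq_prod_map_map mf1.aemeasurable mg1.aemeasurable] at h1
  rw [indepFun_iff_map_prod_eq_prod_map_map mf2.aemeasurable mg2.aemeasurable] at h2
  rw [h1, h2, hf.map_eq, hg.map_eq]

end Indep



section Det

variable (a b p : ℕ → ℝ) (θ : ℝ)

/-- Deterministic version of `Yrv` for a fixed sample path. -/
def Ydet (n : ℕ) : ℝ :=
  if p n ≤ a n ^ θ / (a n ^ θ + b n ^ θ) then Real.log (p n) else Real.log (1 - p n)

/-- Deterministic version of `Zrv` for a fixed sample path. -/
def Zdet (n : ℕ) : ℝ :=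
  if p n ≤ a n ^ θ / (a n ^ θ + b n ^ θ) then Real.log (a n) else Real.log (b n)

/-- The digit chosen at step `n` along the distinguished branch. -/
def dig (n : ℕ) : Bool :=
  if p n ≤ a n ^ θ / (a n ^ θ + b n ^ θ) then false else true

/-- The digit string of the distinguished branch up to level `n`. -/
def branch (n : ℕ) : List Bool := (List.range n).map (fun i => dig a b p θ (i + 1))

lemma branch_length (n : ℕ) : (branch a b p θ n).length = n := by simp [branch]

lemma branch_succ (n : ℕ) :
    branch a b p θ (n + 1) = branch a b p θ n ++ [dig a b p θ (n + 1)] := by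
  simp [branch, List.range_succ]

lemma branch_dropLast (n : ℕ) :
    (branch a b p θ (n + 1)).dropLast = branch a b p θ n := by
  rw [branch_succ, List.dropLast_concat]

lemma LEN_succ (n : ℕ) :
    moranLenAux a b 0 1 (branch a b p θ (n + 1))
      = (if dig a b p θ (n + 1) then b (n + 1) else a (n + 1))
          * moranLenAux a b 0 1 (branch a b p θ n) := by
  rw [branch_succ, moranLenAux_append]
  simp [moranLenAux, branch_length]

lemma M_succ (n : ℕ) :
    moranMassAux p 0 1 (branch a b p θ (n + 1))
      = (if dig a b p θ (n + 1) then 1 - p (n + 1) else p (n + 1))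
          * moranMassAux p 0 1 (branch a b p θ n) := by
  rw [branch_succ, moranMassAux_append]
  simp [moranMassAux, branch_length]

lemma L_succ (n : ℕ) :
    leftAux a b 0 0 1 (branch a b p θ (n + 1))
      = (if dig a b p θ (n + 1) then
          leftAux a b 0 0 1 (branch a b p θ n) + moranLenAux a b 0 1 (branch a b p θ n)
            - b (n + 1) * moranLenAux a b 0 1 (branch a b p θ n)
        else leftAux a b 0 0 1 (branch a b p θ n)) := by
  rw [branch_succ, leftAux_append]
  by_cases hd : dig a b p θ (n + 1) = true
  · simp [hd, leftAux, branch_length]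
  · simp only [Bool.not_eq_true] at hd
    simp [hd, leftAux, branch_length]

end Det

theorem main_det (a b p : ℕ → ℝ) {A B : ℝ} (hA : 0 < A) (hB1 : B < 1)
    (hab : ∀ n, A ≤ min (a n) (b n) ∧ a n + b n ≤ B) (hp : ∀ n, p n ∈ Set.Icc (0:ℝ) 1)
    (μ : Measure ℝ) [IsProbabilityMeasure μ]
    (hsupp : measSupport μ = moranSet a b)
    (hmass : ∀ v : List Bool, μ (moranInt a b v) = ENNReal.ofReal (moranMass p v))
    (ψ : ℝ) (hψ : 0 < ψ) (EY EZ : ℝ)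
    (hSY : Tendsto (fun n : ℕ => (∑ i ∈ Finset.range n, Ydet a b p ψ (i+1)) / n) atTop (𝓝 EY))
    (hSZ : Tendsto (fun n : ℕ => (∑ i ∈ Finset.range n, Zdet a b p ψ (i+1)) / n) atTop (𝓝 EZ))
    (hEZ : EZ < 0) (hEY : EY ≤ ψ * EZ)
    (Φ : ℝ → ℝ) (hΦ0 : ∀ t, t ∈ Set.Ioo (0:ℝ) 1 → 0 ≤ Φ t)
    (d : ℝ) (hd : upperDimAdmissible Φ μ d) : ψ ≤ d := by
  classical
  have ha : ∀ n, A ≤ a n := fun n => (hab n).1.trans (min_le_left _ _)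
  have hb : ∀ n, A ≤ b n := fun n => (hab n).1.trans (min_le_right _ _)
  have hsum : ∀ n, a n + b n ≤ B := fun n => (hab n).2
  have hapos : ∀ n, 0 < a n := fun n => hA.trans_le (ha n)
  have hbpos : ∀ n, 0 < b n := fun n => hA.trans_le (hb n)
  have hB0 : 0 < B := by nlinarith [ha 0, hb 0, hsum 0]
  have h1B : (0:ℝ) < 1 - B := by linarith
  set c := dig a b p ψ with hc
  set V := branch a b p ψ with hV
  set LEN := fun n => moranLenAux a b 0 1 (V n) with hLENdef
  set L := fun n => leftAux a b 0 0 1 (V n) with hLdef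
  set M := fun n => moranMassAux p 0 1 (V n) with hMdef
  have hLEN0 : LEN 0 = 1 := by simp [hLENdef, hV, branch, moranLenAux]
  have hLENs : ∀ n, LEN (n+1) = (if c (n+1) then b (n+1) else a (n+1)) * LEN n :=
    fun n => LEN_succ a b p ψ n
  have hMs : ∀ n, M (n+1) = (if c (n+1) then 1 - p (n+1) else p (n+1)) * M n :=
    fun n => M_succ a b p ψ n
  have hLs : ∀ n, L (n+1) = (if c (n+1) then L n + LEN n - b (n+1) * LEN n else L n) :=
    fun n => L_succ a b p ψ n
  have hLENpos : ∀ n, 0 < LEN n :=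
    fun n => moranLenAux_pos a b hA ha hb _ _ _ one_pos
  have hfle : ∀ n, (if c (n+1) then b (n+1) else a (n+1)) ≤ B := by
    intro n
    rcases Bool.dichotomy (c (n+1)) with h | h <;> rw [h]
    · simp only [Bool.false_eq_true, if_false]
      nlinarith [hsum (n+1), hb (n+1)]
    · simp only [if_true]
      nlinarith [hsum (n+1), ha (n+1)]
  have hLENleB : ∀ n, LEN n ≤ B ^ n := by
    intro n
    induction n with
    | zero => simp [hLEN0]
    | succ n ih =>
      rw [hLENs n, pow_succ]
      calc (if c (n+1) then b (n+1) else a (n+1)) * LEN n ≤ B * LEN n :=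
            mul_le_mul_of_nonneg_right (hfle n) (hLENpos n).le
        _ ≤ B * B ^ n := mul_le_mul_of_nonneg_left ih hB0.le
        _ = B ^ n * B := mul_comm _ _
  have hM0 : ∀ n, 0 ≤ M n := by
    intro n
    induction n with
    | zero => simp [hMdef, hV, branch, moranMassAux]
    | succ n ih =>
      rw [hMs n]
      refine mul_nonneg ?_ ih
      rcases Bool.dichotomy (c (n+1)) with h | h <;> rw [h]
      · simp only [Bool.false_eq_true, if_false]
        exact (hp (n+1)).1
      · simp only [if_true]
        linarith [(hp (n+1)).2]
  have hLENexp : ∀ n, LEN n = Real.exp (∑ i ∈ Finset.range n, Zdet a b p ψ (i+1)) := by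
    intro n
    induction n with
    | zero => simp [hLEN0]
    | succ n ih =>
      rw [hLENs n, Finset.sum_range_succ, Real.exp_add, ← ih]
      have hfac : (if c (n+1) then b (n+1) else a (n+1)) = Real.exp (Zdet a b p ψ (n+1)) := by
        by_cases hcnd : p (n+1) ≤ a (n+1) ^ ψ / (a (n+1) ^ ψ + b (n+1) ^ ψ)
        · rw [hc]
          simp only [dig, Zdet, if_pos hcnd, Bool.false_eq_true, if_false]
          rw [Real.exp_log (hapos (n+1))]
        · rw [hc]
          simp only [dig, Zdet, if_neg hcnd, if_true]
          rw [Real.exp_log (hbpos (n+1))]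
      rw [hfac]; ring
  have hMexp : ∀ n, M n ≤ Real.exp (∑ i ∈ Finset.range n, Ydet a b p ψ (i+1)) := by
    intro n
    induction n with
    | zero => simp [hMdef, hV, branch, moranMassAux]
    | succ n ih =>
      rw [hMs n, Finset.sum_range_succ, Real.exp_add]
      have hg : (if c (n+1) then 1 - p (n+1) else p (n+1)) ≤ Real.exp (Ydet a b p ψ (n+1)) := by
        by_cases hcnd : p (n+1) ≤ a (n+1) ^ ψ / (a (n+1) ^ ψ + b (n+1) ^ ψ)
        · rw [hc]
          simp only [dig, Ydet, if_pos hcnd, Bool.false_eq_true, if_false]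
          rcases lt_or_ge 0 (p (n+1)) with h | h
          · rw [Real.exp_log h]
          · exact h.trans (Real.exp_pos _).le
        · rw [hc]
          simp only [dig, Ydet, if_neg hcnd, if_true]
          rcases lt_or_ge 0 (1 - p (n+1)) with h | h
          · rw [Real.exp_log h]
          · exact h.trans (Real.exp_pos _).le
      have hg0 : 0 ≤ (if c (n+1) then 1 - p (n+1) else p (n+1)) := by
        rcases Bool.dichotomy (c (n+1)) with h | h <;> rw [h]
        · simp only [Bool.false_eq_true, if_false]
          exact (hp (n+1)).1
        · simp only [if_true]
          linarith [(hp (n+1)).2]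
      calc (if c (n+1) then 1 - p (n+1) else p (n+1)) * M n
            ≤ Real.exp (Ydet a b p ψ (n+1))
              * Real.exp (∑ i ∈ Finset.range n, Ydet a b p ψ (i+1)) :=
          mul_le_mul hg ih (hM0 n) (Real.exp_pos _).le
        _ = Real.exp (∑ i ∈ Finset.range n, Ydet a b p ψ (i+1))
              * Real.exp (Ydet a b p ψ (n+1)) := mul_comm _ _
  have hLm : ∀ n, L n ≤ L (n+1) := by
    intro n
    rw [hLs n]
    rcases Bool.dichotomy (c (n+1)) with h | h <;> rw [h]
    · simp only [Bool.false_eq_true, if_false]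
      exact le_rfl
    · simp only [if_true]
      nlinarith [hLENpos n, hb (n+1), hsum (n+1), hapos (n+1)]
  have hUa : ∀ n, L (n+1) + LEN (n+1) ≤ L n + LEN n := by
    intro n
    rw [hLs n, hLENs n]
    rcases Bool.dichotomy (c (n+1)) with h | h <;> rw [h]
    · simp only [Bool.false_eq_true, if_false]
      nlinarith [hLENpos n, hbpos (n+1), hsum (n+1)]
    · simp only [if_true]
      nlinarith [hLENpos n]
  have monoL : Monotone L := monotone_nat_of_le_succ hLm
  have antiU : Antitone (fun n => L n + LEN n) := antitone_nat_of_succ_le hUa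
  have hbdd : BddAbove (Set.range L) := by
    refine ⟨L 0 + LEN 0, ?_⟩
    rintro _ ⟨m, rfl⟩
    calc L m ≤ L m + LEN m := le_add_of_nonneg_right (hLENpos m).le
      _ ≤ L 0 + LEN 0 := antiU (Nat.zero_le m)
  set x := ⨆ n, L n with hx
  have hxlb : ∀ n, L n ≤ x := fun n => le_ciSup hbdd n
  have hxub : ∀ n, x ≤ L n + LEN n := by
    intro n
    refine ciSup_le fun m => ?_
    rcases le_total m n with h | h
    · exact (monoL h).trans (le_add_of_nonneg_right (hLENpos n).le)
    · exact (le_add_of_nonneg_right (hLENpos m).le).trans (antiU h)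
  have hxmem : ∀ n, x ∈ moranInt a b (V n) := by
    intro n
    rw [moranInt, moranAux_eq]
    exact ⟨hxlb n, hxub n⟩
  have hxM : x ∈ moranSet a b :=
    Set.mem_iInter.2 fun n =>
      Set.mem_biUnion (show V n ∈ {v : List Bool | v.length = n} from branch_length a b p ψ n)
        (hxmem n)
  have hxsupp : x ∈ measSupport μ := by rw [hsupp]; exact hxM
  have hball : ∀ (n : ℕ) (r : ℝ), 0 < r → r ≤ (1 - B) * LEN n →
      μ (ball x r) ≤ ENNReal.ofReal (M (n+1)) := by
    intro n r hr0 hrle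
    have hsub : ball x r ⊆ moranInt a b (V (n+1)) ∪ (measSupport μ)ᶜ := by
      intro z hz
      by_cases hzs : z ∈ measSupport μ
      · left
        have hzM : z ∈ moranSet a b := by rw [← hsupp]; exact hzs
        have hzn := Set.mem_iInter.1 hzM (n+1)
        rw [Set.mem_iUnion₂] at hzn
        obtain ⟨w, hwlen, hzw⟩ := hzn
        rcases eq_or_ne w (V (n+1)) with rfl | hne
        · exact hzw
        · exfalso
          have hsep := moran_sep a b hA hB1 ha hb hsum (V (n+1)) w
            (by rw [hV, branch_length]; exact (hwlen : w.length = n+1).symm) hne.symm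
            0 0 1 one_pos x (hxmem (n+1)) z hzw
          rw [hV, branch_dropLast] at hsep
          have hdist : |x - z| < r := by
            rw [abs_sub_comm]
            simpa [Real.dist_eq] using hz
          have hge : (1 - B) * LEN n ≤ |x - z| := hsep
          linarith
      · right; exact hzs
    calc μ (ball x r) ≤ μ (moranInt a b (V (n+1)) ∪ (measSupport μ)ᶜ) := measure_mono hsub
      _ ≤ μ (moranInt a b (V (n+1))) + μ ((measSupport μ)ᶜ) := measure_union_le _ _
      _ = ENNReal.ofReal (M (n+1)) := by
          rw [measSupport_compl_null, add_zero, hmass]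
          rfl
  obtain ⟨C₁, hC₁, C₂, hC₂, hAdm⟩ := hd
  by_contra hcon
  push_neg at hcon
  set R := min C₁ (1/2 : ℝ) with hR
  have hR0 : 0 < R := lt_min hC₁ (by norm_num)
  have hR1 : R < 1 := (min_le_right _ _).trans_lt (by norm_num)
  have hΦR : 0 ≤ Φ R := hΦ0 R ⟨hR0, hR1⟩
  have hRpow_le : R ^ (1 + Φ R) ≤ R := by
    have h := Real.rpow_le_rpow_of_exponent_ge hR0 hR1.le (by linarith : (1:ℝ) ≤ 1 + Φ R)
    simpa [Real.rpow_one] using h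
  have hρ0 : 0 < R ^ (1 + Φ R) := Real.rpow_pos_of_pos hR0 _
  have hmb : μ (ball x R) ≠ 0 := (hxsupp R hR0).ne'
  have hmt : μ (ball x R) ≠ ⊤ := measure_ne_top μ _
  set m0 := (μ (ball x R)).toReal with hm0def
  have hm0 : 0 < m0 := ENNReal.toReal_pos hmb hmt
  set K := Real.log C₂ + d * Real.log R - d * Real.log (1 - B) with hK
  have hkey : ∀ n : ℕ, (1 - B) * LEN n < R ^ (1 + Φ R) →
      Real.log m0 ≤ K + ((∑ i ∈ Finset.range (n+1), Ydet a b p ψ (i+1))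
        - d * (∑ i ∈ Finset.range n, Zdet a b p ψ (i+1))) := by
    intro n hrρ
    set r := (1 - B) * LEN n with hr
    have hr0 : 0 < r := mul_pos h1B (hLENpos n)
    have hA1 := hAdm x hxsupp R r hr0 hrρ hRpow_le (min_le_left _ _)
    have hμr : μ (ball x r)
        ≤ ENNReal.ofReal (Real.exp (∑ i ∈ Finset.range (n+1), Ydet a b p ψ (i+1))) :=
      le_trans (hball n r hr0 le_rfl) (ENNReal.ofReal_le_ofReal (hMexp (n+1)))
    have hchain : ENNReal.ofReal m0 ≤ ENNReal.ofReal (C₂ * (R/r) ^ d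
        * Real.exp (∑ i ∈ Finset.range (n+1), Ydet a b p ψ (i+1))) := by
      have h0 : (0:ℝ) ≤ C₂ * (R/r) ^ d := by positivity
      calc ENNReal.ofReal m0 = μ (ball x R) := ENNReal.ofReal_toReal hmt
        _ ≤ ENNReal.ofReal (C₂ * (R/r) ^ d) * μ (ball x r) := hA1
        _ ≤ ENNReal.ofReal (C₂ * (R/r) ^ d)
            * ENNReal.ofReal (Real.exp (∑ i ∈ Finset.range (n+1), Ydet a b p ψ (i+1))) :=
            mul_le_mul_right hμr _
        _ = ENNReal.ofReal (C₂ * (R/r) ^ d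
            * Real.exp (∑ i ∈ Finset.range (n+1), Ydet a b p ψ (i+1))) :=
            (ENNReal.ofReal_mul h0).symm
    have hre : m0 ≤ C₂ * (R/r) ^ d
        * Real.exp (∑ i ∈ Finset.range (n+1), Ydet a b p ψ (i+1)) := by
      have hrhs : (0:ℝ) ≤ C₂ * (R/r) ^ d
          * Real.exp (∑ i ∈ Finset.range (n+1), Ydet a b p ψ (i+1)) := by positivity
      exact (ENNReal.ofReal_le_ofReal_iff hrhs).1 hchain
    have hlog := Real.log_le_log hm0 hre
    have hRr : (0:ℝ) < R / r := div_pos hR0 hr0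
    have hlogr : Real.log r
        = Real.log (1 - B) + ∑ i ∈ Finset.range n, Zdet a b p ψ (i+1) := by
      rw [hr, Real.log_mul (ne_of_gt h1B) (ne_of_gt (hLENpos n)), hLENexp n, Real.log_exp]
    have hexpand : Real.log (C₂ * (R/r) ^ d
          * Real.exp (∑ i ∈ Finset.range (n+1), Ydet a b p ψ (i+1)))
        = Real.log C₂ + d * (Real.log R - Real.log r)
          + ∑ i ∈ Finset.range (n+1), Ydet a b p ψ (i+1) := by
      rw [Real.log_mul (by positivity) (ne_of_gt (Real.exp_pos _)),
        Real.log_mul (ne_of_gt hC₂) (by positivity), Real.log_exp,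
        Real.log_rpow hRr, Real.log_div (ne_of_gt hR0) (ne_of_gt hr0)]
    rw [hexpand, hlogr] at hlog
    rw [hK]
    linarith
  set δ := EY - d * EZ with hδdef
  have hδ : δ < 0 := by nlinarith [mul_pos (sub_pos.2 hcon) (neg_pos.2 hEZ)]
  have t1 : Tendsto (fun n : ℕ =>
      (∑ i ∈ Finset.range (n+1), Ydet a b p ψ (i+1)) / ((n:ℝ)+1)) atTop (𝓝 EY) := by
    have h := hSY.comp (tendsto_add_atTop_nat 1)
    refine h.congr fun n => ?_
    simp only [Function.comp_apply]
    push_cast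
    ring
  have t2 : Tendsto (fun n : ℕ => ((n:ℝ)+1) / n) atTop (𝓝 1) := by
    have h : Tendsto (fun n : ℕ => 1 + 1/(n:ℝ)) atTop (𝓝 (1+0)) :=
      tendsto_const_nhds.add tendsto_one_div_atTop_nhds_zero_nat
    rw [add_zero] at h
    refine h.congr' ?_
    filter_upwards [eventually_ge_atTop 1] with n hn
    have hn0 : (n:ℝ) ≠ 0 := by
      have : (1:ℝ) ≤ (n:ℝ) := by exact_mod_cast hn
      linarith
    field_simp
  have t3 : Tendsto (fun n : ℕ =>
      (∑ i ∈ Finset.range (n+1), Ydet a b p ψ (i+1)) / n) atTop (𝓝 EY) := by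
    have h := t1.mul t2
    rw [mul_one] at h
    refine h.congr' ?_
    filter_upwards [eventually_ge_atTop 1] with n hn
    have hn1 : ((n:ℝ)+1) ≠ 0 := by positivity
    rw [div_mul_div_comm, mul_comm (∑ i ∈ Finset.range (n+1), Ydet a b p ψ (i+1)) _,
      mul_div_mul_left _ _ hn1]
  have t4 : Tendsto (fun n : ℕ =>
      (∑ i ∈ Finset.range (n+1), Ydet a b p ψ (i+1)) / n
        - d * ((∑ i ∈ Finset.range n, Zdet a b p ψ (i+1)) / n)) atTop (𝓝 δ) := by
    rw [hδdef]
    exact t3.sub (hSZ.const_mul d)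
  have t5 : ∀ᶠ n : ℕ in atTop,
      (∑ i ∈ Finset.range (n+1), Ydet a b p ψ (i+1)) / n
        - d * ((∑ i ∈ Finset.range n, Zdet a b p ψ (i+1)) / n) < δ/2 :=
    t4.eventually_lt_const (by linarith)
  have t6 : Tendsto (fun n : ℕ => (n:ℝ) * (δ/2)) atTop atBot :=
    Tendsto.atTop_mul_const_of_neg (by linarith) tendsto_natCast_atTop_atTop
  have hTB : Tendsto (fun n : ℕ => (∑ i ∈ Finset.range (n+1), Ydet a b p ψ (i+1))
      - d * (∑ i ∈ Finset.range n, Zdet a b p ψ (i+1))) atTop atBot := by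
    refine tendsto_atBot_mono' atTop ?_ t6
    filter_upwards [t5, eventually_ge_atTop 1] with n h5 h1
    have hn0 : (0:ℝ) < n := by exact_mod_cast h1
    have heq : (∑ i ∈ Finset.range (n+1), Ydet a b p ψ (i+1))
        - d * (∑ i ∈ Finset.range n, Zdet a b p ψ (i+1))
        = (n:ℝ) * ((∑ i ∈ Finset.range (n+1), Ydet a b p ψ (i+1)) / n
            - d * ((∑ i ∈ Finset.range n, Zdet a b p ψ (i+1)) / n)) := by
      field_simp
    rw [heq]
    exact mul_le_mul_of_nonneg_left h5.le hn0.le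
  have hrho : ∀ᶠ n : ℕ in atTop, (1 - B) * LEN n < R ^ (1 + Φ R) := by
    have hLB : Tendsto (fun n : ℕ => (1 - B) * LEN n) atTop (𝓝 0) := by
      have hup : Tendsto (fun n : ℕ => (1 - B) * B ^ n) atTop (𝓝 ((1-B) * 0)) :=
        (tendsto_pow_atTop_nhds_zero_of_lt_one hB0.le hB1).const_mul _
      rw [mul_zero] at hup
      refine squeeze_zero (fun n => ?_) (fun n => ?_) hup
      · exact mul_nonneg h1B.le (hLENpos n).le
      · exact mul_le_mul_of_nonneg_left (hLENleB n) h1B.le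
    exact hLB.eventually_lt_const hρ0
  have hbig : ∀ᶠ n : ℕ in atTop, (∑ i ∈ Finset.range (n+1), Ydet a b p ψ (i+1))
      - d * (∑ i ∈ Finset.range n, Zdet a b p ψ (i+1)) < Real.log m0 - K :=
    hTB.eventually_lt_atBot _
  obtain ⟨n, hn1, hn2⟩ := (hbig.and hrho).exists
  have hk := hkey n hn2
  linarith


end MoranProof

/-- Theorem, part (ii): if `G(ψ) ≥ ψ` then almost surely
`dim̄_Φ μ_ω ≥ ψ` for every large dimension function `Φ`. -/
theorem upperPhiDim_ge_of_G_ge {Ω : Type*} [MeasurableSpace Ω] (P : Measure Ω) [IsProbabilityMeasure P]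
    (A B : ℝ) (hA : 0 < A) (hAB : A < B) (hB1 : B < 1)
    (S : MoranSystem Ω P A B) (μ : Ω → Measure ℝ)
    (hμ : ∀ ω, IsMoranMeasure (S.a ω) (S.b ω) (S.p ω) (μ ω))
    (ψ : ℝ) (hψ : 0 < ψ) (hG : ψ ≤ Gfn P S.a S.b S.p ψ) :
    ∃ Γ : Set Ω, P Γᶜ = 0 ∧ ∀ Φ : ℝ → ℝ, LargeDimFn Φ → ∀ ω ∈ Γ,
      ENNReal.ofReal ψ ≤ upperPhiDim Φ (μ ω) := by
  classical
  by_cases hIntY : Integrable (fun ω => Yrv S.a S.b S.p ψ 1 ω) P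
  case neg =>
    have h0 : Gfn P S.a S.b S.p ψ = 0 := by
      unfold Gfn
      rw [integral_undef hIntY, zero_div]
    rw [h0] at hG
    linarith
  case pos =>
  -- measurability of the building blocks
  have hcond : MeasurableSet {q : (ℝ × ℝ) × ℝ | q.2 ≤ q.1.1 ^ ψ / (q.1.1 ^ ψ + q.1.2 ^ ψ)} := by
    have h1 : Measurable fun q : (ℝ × ℝ) × ℝ => q.1.1 ^ ψ :=
      (Real.continuous_rpow_const hψ.le).measurable.comp measurable_fst.fst
    have h2 : Measurable fun q : (ℝ × ℝ) × ℝ => q.1.2 ^ ψ :=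
      (Real.continuous_rpow_const hψ.le).measurable.comp measurable_fst.snd
    exact measurableSet_le measurable_snd (h1.div (h1.add h2))
  have hmYf : Measurable (fun q : (ℝ × ℝ) × ℝ =>
      if q.2 ≤ q.1.1 ^ ψ / (q.1.1 ^ ψ + q.1.2 ^ ψ) then Real.log q.2
      else Real.log (1 - q.2)) :=
    Measurable.ite hcond (Real.measurable_log.comp measurable_snd)
      (Real.measurable_log.comp (measurable_const.sub measurable_snd))
  have hmZf : Measurable (fun q : (ℝ × ℝ) × ℝ =>
      if q.2 ≤ q.1.1 ^ ψ / (q.1.1 ^ ψ + q.1.2 ^ ψ) then Real.log q.1.1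
      else Real.log q.1.2) :=
    Measurable.ite hcond (Real.measurable_log.comp measurable_fst.fst)
      (Real.measurable_log.comp measurable_fst.snd)
  have hmtriple : ∀ n, Measurable (fun ω => ((S.a ω n, S.b ω n), S.p ω n)) :=
    fun n => (S.meas_ab n).prodMk (S.meas_p n)
  -- pairwise independence and identical distribution of the triples
  have hIndepTriple : ∀ i j, i ≠ j →
      IndepFun (fun ω => ((S.a ω i, S.b ω i), S.p ω i))
        (fun ω => ((S.a ω j, S.b ω j), S.p ω j)) P := by
    intro i j hij
    refine MoranProof.indepFun_pair_pair (S.meas_ab i) (S.meas_ab j) (S.meas_p i) (S.meas_p j)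
      (S.indep_ab.indepFun hij) (S.indep_p.indepFun hij) ?_
    exact S.indep_ab_p.comp
      ((measurable_pi_apply i).prodMk (measurable_pi_apply j))
      ((measurable_pi_apply i).prodMk (measurable_pi_apply j))
  have hab_p_indep : ∀ n, IndepFun (fun ω => (S.a ω n, S.b ω n)) (fun ω => S.p ω n) P :=
    fun n => S.indep_ab_p.comp (measurable_pi_apply n) (measurable_pi_apply n)
  have hIdentTriple : ∀ n,
      IdentDistrib (fun ω => ((S.a ω n, S.b ω n), S.p ω n))
        (fun ω => ((S.a ω 1, S.b ω 1), S.p ω 1)) P P :=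
    fun n => MoranProof.identDistrib_pair (S.meas_ab n) (S.meas_ab 1) (S.meas_p n) (S.meas_p 1)
      (S.ident_ab n) (S.ident_p n) (hab_p_indep n) (hab_p_indep 1)
  -- integrability of Z₁
  have hABlt1 : A < 1 := hAB.trans hB1
  have habs : ∀ t : ℝ, A ≤ t → t ≤ 1 → |Real.log t| ≤ |Real.log A| := by
    intro t ht1 ht2
    have hlogA : Real.log A < 0 := Real.log_neg hA hABlt1
    have h3 : Real.log A ≤ Real.log t := Real.log_le_log hA ht1
    have h4 : Real.log t ≤ 0 := Real.log_nonpos (le_trans hA.le ht1) ht2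
    rw [abs_of_nonpos h4, abs_of_neg hlogA]
    linarith
  have hrange : ∀ (ω : Ω) (n : ℕ), A ≤ S.a ω n ∧ A ≤ S.b ω n ∧ S.a ω n + S.b ω n ≤ B := by
    intro ω n
    obtain ⟨h1, h2⟩ := S.range_ab ω n
    exact ⟨h1.trans (min_le_left _ _), h1.trans (min_le_right _ _), h2⟩
  have hZbd : ∀ ω, |Zrv S.a S.b S.p ψ 1 ω| ≤ |Real.log A| := by
    intro ω
    obtain ⟨h1, h2, h3⟩ := hrange ω 1
    unfold Zrv
    split
    · exact habs _ h1 (by linarith)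
    · exact habs _ h2 (by linarith)
  have hIntZ : Integrable (fun ω => Zrv S.a S.b S.p ψ 1 ω) P := by
    refine Integrable.mono' (integrable_const |Real.log A|)
      ((hmZf.comp (hmtriple 1)).aestronglyMeasurable) ?_
    exact Filter.Eventually.of_forall fun ω => by
      simpa [Real.norm_eq_abs] using hZbd ω
  set EY := ∫ ω, Yrv S.a S.b S.p ψ 1 ω ∂P with hEYdef
  set EZ := ∫ ω, Zrv S.a S.b S.p ψ 1 ω ∂P with hEZdef
  have hEZneg : EZ < 0 := by
    have hZle : ∀ ω, Zrv S.a S.b S.p ψ 1 ω ≤ Real.log (B - A) := by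
      intro ω
      obtain ⟨h1, h2, h3⟩ := hrange ω 1
      unfold Zrv
      split
      · exact Real.log_le_log (hA.trans_le h1) (by linarith)
      · exact Real.log_le_log (hA.trans_le h2) (by linarith)
    have h5 : EZ ≤ Real.log (B - A) := by
      rw [hEZdef]
      calc ∫ ω, Zrv S.a S.b S.p ψ 1 ω ∂P ≤ ∫ _, Real.log (B - A) ∂P :=
            integral_mono hIntZ (integrable_const _) hZle
        _ = Real.log (B - A) := by simp
    have h6 : Real.log (B - A) < 0 := Real.log_neg (by linarith) (by linarith)
    linarith
  have hEY : EY ≤ ψ * EZ := by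
    have hG2 : ψ ≤ EY / EZ := hG
    rwa [le_div_iff_of_neg hEZneg] at hG2
  -- strong laws of large numbers
  have hYae := strong_law_ae_real (μ := P) (fun i ω => Yrv S.a S.b S.p ψ (i+1) ω) hIntY
    (fun i j hij => (hIndepTriple (i+1) (j+1) (by omega)).comp hmYf hmYf)
    (fun i => (hIdentTriple (i+1)).comp hmYf)
  have hZae := strong_law_ae_real (μ := P) (fun i ω => Zrv S.a S.b S.p ψ (i+1) ω) hIntZ
    (fun i j hij => (hIndepTriple (i+1) (j+1) (by omega)).comp hmZf hmZf)
    (fun i => (hIdentTriple (i+1)).comp hmZf)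
  refine ⟨{ω | Tendsto (fun n : ℕ =>
      (∑ i ∈ Finset.range n, Yrv S.a S.b S.p ψ (i+1) ω) / n) atTop (nhds EY)
    ∧ Tendsto (fun n : ℕ =>
      (∑ i ∈ Finset.range n, Zrv S.a S.b S.p ψ (i+1) ω) / n) atTop (nhds EZ)}, ?_, ?_⟩
  · have hae : ∀ᵐ ω ∂P, (Tendsto (fun n : ℕ =>
        (∑ i ∈ Finset.range n, Yrv S.a S.b S.p ψ (i+1) ω) / n) atTop (nhds EY)
      ∧ Tendsto (fun n : ℕ =>
        (∑ i ∈ Finset.range n, Zrv S.a S.b S.p ψ (i+1) ω) / n) atTop (nhds EZ)) := by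
      filter_upwards [hYae, hZae] with ω h1 h2
      exact ⟨h1, h2⟩
    exact mem_ae_iff.1 hae
  · rintro Φ hΦ ω ⟨hω1, hω2⟩
    obtain ⟨hprob, hsupp, hmass⟩ := hμ ω
    haveI : IsProbabilityMeasure (μ ω) := hprob
    unfold upperPhiDim
    refine le_iInf fun d => le_iInf fun hd => ENNReal.ofReal_le_ofReal ?_
    exact MoranProof.main_det (S.a ω) (S.b ω) (S.p ω) hA hB1 (S.range_ab ω) (S.range_p ω)
      (μ ω) hsupp hmass ψ hψ EY EZ hω1 hω2 hEZneg hEY Φ hΦ.1.1 d hd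

end
end

section
/- Suppose ψ > 0 satisfies G'(ψ) ≤ ψ. Then there is a set Γ_ψ ⊆ Ω of full P-measure such that dim̲_Φ μ_ω ≤ ψ for every large dimension function Φ and every ω ∈ Γ_ψ. -/
open MeasureTheory ProbabilityTheory Filter Set Metric
open scoped ENNReal NNReal

noncomputable section

/-! ### Auxiliary deterministic lemmas -/

/-- Accumulator computing the left endpoint and length of a Moran interval. -/
def moranAcc (a b : ℕ → ℝ) : ℕ → ℝ × ℝ → List Bool → ℝ × ℝ
  | _, q, [] => q
  | n, q, true :: v => moranAcc a b (n+1) (q.1 + q.2 - b (n+1) * q.2, b (n+1) * q.2) v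
  | n, q, false :: v => moranAcc a b (n+1) (q.1, a (n+1) * q.2) v

theorem moranAux_eq_Icc (a b : ℕ → ℝ) : ∀ (v : List Bool) (n : ℕ) (l len : ℝ),
    moranAux a b n l len v =
      Icc (moranAcc a b n (l,len) v).1
        ((moranAcc a b n (l,len) v).1 + (moranAcc a b n (l,len) v).2)
  | [], n, l, len => rfl
  | c :: v, n, l, len => by
      cases c <;> simp [moranAux, moranAcc, moranAux_eq_Icc a b v]

theorem moranLenAux_eq_acc (a b : ℕ → ℝ) : ∀ (v : List Bool) (n : ℕ) (l len : ℝ),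
    moranLenAux a b n len v = (moranAcc a b n (l,len) v).2
  | [], _, _, _ => rfl
  | c :: v, n, l, len => by
      cases c
      · simpa [moranLenAux, moranAcc] using moranLenAux_eq_acc a b v (n+1) l (a (n+1) * len)
      · simpa [moranLenAux, moranAcc] using
          moranLenAux_eq_acc a b v (n+1) (l + len - b (n+1) * len) (b (n+1) * len)

theorem moranAcc_append (a b : ℕ → ℝ) : ∀ (v w : List Bool) (n : ℕ) (q : ℝ × ℝ),
    moranAcc a b n q (v ++ w) = moranAcc a b (n + v.length) (moranAcc a b n q v) w
  | [], w, n, q => by simp [moranAcc]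
  | c :: v, w, n, q => by
      cases c <;> simp [moranAcc, moranAcc_append a b v w, Nat.add_comm, Nat.add_assoc,
        Nat.add_left_comm]

section Bounds

variable {a b : ℕ → ℝ}

theorem moranAcc_bounds (ha : ∀ n, 0 ≤ a n) (hb : ∀ n, 0 ≤ b n)
    (hab : ∀ n, a n + b n ≤ 1) :
    ∀ (v : List Bool) (n : ℕ) (l len : ℝ), 0 ≤ len →
    l ≤ (moranAcc a b n (l,len) v).1 ∧
    (moranAcc a b n (l,len) v).1 + (moranAcc a b n (l,len) v).2 ≤ l + len ∧
    0 ≤ (moranAcc a b n (l,len) v).2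
  | [], n, l, len, hlen => ⟨le_rfl, le_rfl, hlen⟩
  | c :: v, n, l, len, hlen => by
      have ha1 : a (n+1) ≤ 1 := by have := hab (n+1); have := hb (n+1); linarith
      have hb1 : b (n+1) ≤ 1 := by have := hab (n+1); have := ha (n+1); linarith
      cases c
      · have h2 : (0:ℝ) ≤ a (n+1) * len := mul_nonneg (ha _) hlen
        have H := moranAcc_bounds ha hb hab v (n+1) l (a (n+1) * len) h2
        have hle : a (n+1) * len ≤ 1 * len := mul_le_mul_of_nonneg_right ha1 hlen
        refine ⟨?_, ?_, ?_⟩ <;> simp only [moranAcc] <;>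
          [exact H.1; linarith [H.2.1]; exact H.2.2]
      · have h2 : (0:ℝ) ≤ b (n+1) * len := mul_nonneg (hb _) hlen
        have H := moranAcc_bounds ha hb hab v (n+1) (l + len - b (n+1) * len) (b (n+1) * len) h2
        have hle : b (n+1) * len ≤ 1 * len := mul_le_mul_of_nonneg_right hb1 hlen
        refine ⟨?_, ?_, ?_⟩ <;> simp only [moranAcc] <;>
          [linarith [H.1]; linarith [H.2.1]; exact H.2.2]

theorem moranAcc_len_pos (ha : ∀ n, 0 < a n) (hb : ∀ n, 0 < b n) :
    ∀ (v : List Bool) (n : ℕ) (l len : ℝ), 0 < len → 0 < (moranAcc a b n (l,len) v).2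
  | [], n, l, len, hlen => hlen
  | c :: v, n, l, len, hlen => by
      cases c
      · exact moranAcc_len_pos ha hb v (n+1) l (a (n+1)*len) (mul_pos (ha _) hlen)
      · exact moranAcc_len_pos ha hb v (n+1) (l + len - b (n+1)*len) (b (n+1)*len)
          (mul_pos (hb _) hlen)

theorem moranAux_subset (ha : ∀ n, 0 ≤ a n) (hb : ∀ n, 0 ≤ b n)
    (hab : ∀ n, a n + b n ≤ 1) (v : List Bool) (n : ℕ) (l len : ℝ) (hlen : 0 ≤ len) :
    moranAux a b n l len v ⊆ Icc l (l + len) := by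
  rw [moranAux_eq_Icc]
  obtain ⟨h1, h2, h3⟩ := moranAcc_bounds ha hb hab v n l len hlen
  exact Icc_subset_Icc h1 h2

theorem moranLenAux_le (ha : ∀ n, 0 ≤ a n) (hb : ∀ n, 0 ≤ b n)
    (hab : ∀ n, a n + b n ≤ 1) (v : List Bool) (n : ℕ) (len : ℝ) (hlen : 0 ≤ len) :
    moranLenAux a b n len v ≤ len := by
  rw [moranLenAux_eq_acc a b v n 0 len]
  obtain ⟨h1, h2, h3⟩ := moranAcc_bounds ha hb hab v n 0 len hlen
  linarith

theorem moranLenAux_nonneg (ha : ∀ n, 0 ≤ a n) (hb : ∀ n, 0 ≤ b n)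
    (hab : ∀ n, a n + b n ≤ 1) (v : List Bool) (n : ℕ) (len : ℝ) (hlen : 0 ≤ len) :
    0 ≤ moranLenAux a b n len v := by
  rw [moranLenAux_eq_acc a b v n 0 len]
  exact (moranAcc_bounds ha hb hab v n 0 len hlen).2.2

end Bounds
section Sep

variable {B : ℝ} {a b : ℕ → ℝ}

theorem moranSep (ha : ∀ n, 0 ≤ a n) (hb : ∀ n, 0 ≤ b n)
    (hab : ∀ n, a n + b n ≤ B) (hB : B ≤ 1) :
    ∀ (v w : List Bool) (n : ℕ) (l len : ℝ), 0 ≤ len → v.length = w.length → v ≠ w →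
    ∀ x ∈ moranAux a b n l len v, ∀ y ∈ moranAux a b n l len w,
    (1 - B) * moranLenAux a b n len v ≤ |x - y|
  | [], [], _, _, _, _, _, hne => absurd rfl hne
  | [], c :: w, _, _, _, _, hlen, _ => by simp at hlen
  | c :: v, [], _, _, _, _, hlen, _ => by simp at hlen
  | c :: v, c' :: w, n, l, len, hlen, hlenEq, hne => by
      have hab1 : ∀ m, a m + b m ≤ 1 := fun m => le_trans (hab m) hB
      have hB0 : 0 ≤ 1 - B := by linarith
      by_cases hcc : c = c'
      · subst hcc
        have hvw : v ≠ w := fun h => hne (by rw [h])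
        have hlen2 : (v.length = w.length) := by simpa using hlenEq
        cases c
        · exact fun x hx y hy =>
            moranSep ha hb hab hB v w (n+1) l (a (n+1)*len) (mul_nonneg (ha _) hlen)
              hlen2 hvw x hx y hy
        · exact fun x hx y hy =>
            moranSep ha hb hab hB v w (n+1) (l+len-b (n+1)*len) (b (n+1)*len)
              (mul_nonneg (hb _) hlen) hlen2 hvw x hx y hy
      · intro x hx y hy
        have hla : moranLenAux a b n len (c :: v) ≤ len := moranLenAux_le ha hb hab1 _ n len hlen
        have hmn : (1 - B) * moranLenAux a b n len (c :: v) ≤ (1 - B) * len :=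
          mul_le_mul_of_nonneg_left hla hB0
        have key : (1 - B) * len ≤ |x - y| := by
          cases c
          · cases c'
            · exact absurd rfl hcc
            · -- x in left child, y in right child
              have hx' : x ∈ Icc l (l + a (n+1) * len) :=
                moranAux_subset ha hb hab1 v (n+1) l (a (n+1)*len)
                  (mul_nonneg (ha _) hlen) hx
              have hy' : y ∈ Icc (l+len-b (n+1)*len) (l+len-b (n+1)*len + b (n+1)*len) :=
                moranAux_subset ha hb hab1 w (n+1) (l+len-b (n+1)*len) (b (n+1)*len)
                  (mul_nonneg (hb _) hlen) hy
              have h1 : (1 - B) * len ≤ y - x := by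
                have := hab (n+1)
                have h2 : (a (n+1) + b (n+1)) * len ≤ B * len :=
                  mul_le_mul_of_nonneg_right this hlen
                obtain ⟨hx1, hx2⟩ := hx'; obtain ⟨hy1, hy2⟩ := hy'
                nlinarith
              calc (1 - B) * len ≤ y - x := h1
                _ ≤ |x - y| := by rw [abs_sub_comm]; exact le_abs_self _
          · cases c'
            · have hy' : y ∈ Icc l (l + a (n+1) * len) :=
                moranAux_subset ha hb hab1 w (n+1) l (a (n+1)*len)
                  (mul_nonneg (ha _) hlen) hy
              have hx' : x ∈ Icc (l+len-b (n+1)*len) (l+len-b (n+1)*len + b (n+1)*len) :=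
                moranAux_subset ha hb hab1 v (n+1) (l+len-b (n+1)*len) (b (n+1)*len)
                  (mul_nonneg (hb _) hlen) hx
              have h1 : (1 - B) * len ≤ x - y := by
                have := hab (n+1)
                have h2 : (a (n+1) + b (n+1)) * len ≤ B * len :=
                  mul_le_mul_of_nonneg_right this hlen
                obtain ⟨hx1, hx2⟩ := hx'; obtain ⟨hy1, hy2⟩ := hy'
                nlinarith
              exact le_trans h1 (le_abs_self _)
            · exact absurd rfl hcc
        exact le_trans hmn key

end Sep

/-- The finset of digit strings of length `n`. -/
def moranStrs : ℕ → Finset (List Bool)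
  | 0 => {[]}
  | n+1 => ((moranStrs n).image (List.cons false)) ∪ ((moranStrs n).image (List.cons true))

theorem mem_moranStrs : ∀ (n : ℕ) (v : List Bool), v ∈ moranStrs n ↔ v.length = n
  | 0, v => by
      simp only [moranStrs, Finset.mem_singleton, List.length_eq_zero_iff]
  | n+1, v => by
      simp only [moranStrs, Finset.mem_union, Finset.mem_image]
      constructor
      · rintro (⟨w, hw, rfl⟩ | ⟨w, hw, rfl⟩) <;>
          simp [(mem_moranStrs n w).1 hw]
      · intro hv
        cases v with
        | nil => simp at hv
        | cons c w =>
            have hw : w ∈ moranStrs n := (mem_moranStrs n w).2 (by simpa using hv)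
            cases c
            · exact Or.inl ⟨w, hw, rfl⟩
            · exact Or.inr ⟨w, hw, rfl⟩

theorem sum_moranMassAux (p : ℕ → ℝ) :
    ∀ (n k : ℕ) (m : ℝ), ∑ v ∈ moranStrs n, moranMassAux p k m v = m
  | 0, k, m => by simp [moranStrs, moranMassAux]
  | n+1, k, m => by
      rw [moranStrs, Finset.sum_union, Finset.sum_image (fun x _ y _ h => by
        simpa using h), Finset.sum_image (fun x _ y _ h => by simpa using h)]
      · have h1 : ∀ v ∈ moranStrs n, moranMassAux p k m (false :: v)
            = moranMassAux p (k+1) (p (k+1) * m) v := fun v _ => by simp [moranMassAux]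
        have h2 : ∀ v ∈ moranStrs n, moranMassAux p k m (true :: v)
            = moranMassAux p (k+1) ((1 - p (k+1)) * m) v := fun v _ => by simp [moranMassAux]
        rw [Finset.sum_congr rfl h1, Finset.sum_congr rfl h2,
          sum_moranMassAux p n (k+1) (p (k+1) * m), sum_moranMassAux p n (k+1) ((1 - p (k+1)) * m)]
        ring
      · rw [Finset.disjoint_left]
        intro v hv hv'
        simp only [Finset.mem_image] at hv hv'
        obtain ⟨w, _, rfl⟩ := hv
        obtain ⟨w', _, h⟩ := hv'
        simp at h

theorem moranMassAux_nonneg {p : ℕ → ℝ} (hp : ∀ n, 0 ≤ p n ∧ p n ≤ 1) :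
    ∀ (v : List Bool) (k : ℕ) (m : ℝ), 0 ≤ m → 0 ≤ moranMassAux p k m v
  | [], k, m, hm => hm
  | c :: v, k, m, hm => by
      cases c
      · exact moranMassAux_nonneg hp v (k+1) _ (mul_nonneg (hp _).1 hm)
      · exact moranMassAux_nonneg hp v (k+1) _ (mul_nonneg (by show (0:ℝ) ≤ 1 - p (k+1); linarith [(hp (k+1)).2]) hm)
/-- The digit string `c (k+1), …, c (k+n)`. -/
def moranDigs (c : ℕ → Bool) : ℕ → ℕ → List Bool
  | _, 0 => []
  | k, n+1 => c (k+1) :: moranDigs c (k+1) n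

theorem length_moranDigs (c : ℕ → Bool) : ∀ (n k : ℕ), (moranDigs c k n).length = n
  | 0, _ => rfl
  | n+1, k => by simp [moranDigs, length_moranDigs c n]

theorem moranDigs_append (c : ℕ → Bool) :
    ∀ (n n' k : ℕ), moranDigs c k (n + n') = moranDigs c k n ++ moranDigs c (k + n) n'
  | 0, n', k => by simp [moranDigs]
  | n+1, n', k => by
      have : n + 1 + n' = (n + n') + 1 := by omega
      rw [this]
      show c (k+1) :: moranDigs c (k+1) (n + n') = _
      rw [moranDigs_append c n n' (k+1)]
      simp [moranDigs, Nat.add_comm, Nat.add_assoc, Nat.add_left_comm]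

theorem moranMassAux_digs (p : ℕ → ℝ) (c : ℕ → Bool) :
    ∀ (n k : ℕ) (m : ℝ), moranMassAux p k m (moranDigs c k n)
      = m * ∏ j ∈ Finset.range n, (if c (k+j+1) then 1 - p (k+j+1) else p (k+j+1))
  | 0, k, m => by simp [moranDigs, moranMassAux]
  | n+1, k, m => by
      show moranMassAux p (k+1) _ (moranDigs c (k+1) n) = _
      rw [moranMassAux_digs p c n (k+1), Finset.prod_range_succ']
      have hp : (∏ j ∈ Finset.range n, (if c (k+1+j+1) then 1 - p (k+1+j+1) else p (k+1+j+1)))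
          = ∏ j ∈ Finset.range n, (if c (k+(j+1)+1) then 1 - p (k+(j+1)+1) else p (k+(j+1)+1)) :=
        Finset.prod_congr rfl fun j _ => by
          have h : k+1+j+1 = k+(j+1)+1 := by omega
          rw [h]
      rw [hp]
      simp only [Nat.add_zero]
      ring

theorem moranLenAux_digs (a b : ℕ → ℝ) (c : ℕ → Bool) :
    ∀ (n k : ℕ) (len : ℝ), moranLenAux a b k len (moranDigs c k n)
      = len * ∏ j ∈ Finset.range n, (if c (k+j+1) then b (k+j+1) else a (k+j+1))
  | 0, k, len => by simp [moranDigs, moranLenAux]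
  | n+1, k, len => by
      show moranLenAux a b (k+1) _ (moranDigs c (k+1) n) = _
      rw [moranLenAux_digs a b c n (k+1), Finset.prod_range_succ']
      have hp : (∏ j ∈ Finset.range n, (if c (k+1+j+1) then b (k+1+j+1) else a (k+1+j+1)))
          = ∏ j ∈ Finset.range n, (if c (k+(j+1)+1) then b (k+(j+1)+1) else a (k+(j+1)+1)) :=
        Finset.prod_congr rfl fun j _ => by
          have h : k+1+j+1 = k+(j+1)+1 := by omega
          rw [h]
      rw [hp]
      simp only [Nat.add_zero]
      ring
section ProbAux

variable {α β γ δ : Type*} [MeasurableSpace α] [MeasurableSpace β]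
  [MeasurableSpace γ] [MeasurableSpace δ]

theorem measurePreserving_middleInterchange (μ1 : Measure α) (μ2 : Measure β)
    (μ3 : Measure γ) (μ4 : Measure δ)
    [SFinite μ1] [SFinite μ2] [SFinite μ3] [SFinite μ4] :
    MeasurePreserving (fun q : (α × β) × (γ × δ) => ((q.1.1, q.2.1), (q.1.2, q.2.2)))
      ((μ1.prod μ2).prod (μ3.prod μ4)) ((μ1.prod μ3).prod (μ2.prod μ4)) := by
  have e1 := measurePreserving_prodAssoc μ1 μ2 (μ3.prod μ4)
  have e2 := ((measurePreserving_prodAssoc μ2 μ3 μ4).symm MeasurableEquiv.prodAssoc)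
  have E2 := (MeasurePreserving.id μ1).prod e2
  have e3 := (MeasurePreserving.id μ1).prod
    ((Measure.measurePreserving_swap (μ := μ2) (ν := μ3)).prod (MeasurePreserving.id μ4))
  have e4 := (MeasurePreserving.id μ1).prod (measurePreserving_prodAssoc μ3 μ2 μ4)
  have e5 := ((measurePreserving_prodAssoc μ1 μ3 (μ2.prod μ4)).symm MeasurableEquiv.prodAssoc)
  have total := e5.comp (e4.comp (e3.comp (E2.comp e1)))
  convert total using 1
  funext q; rfl

theorem indepFun_prodMk_prodMk {Ω : Type*} [MeasurableSpace Ω] {P : Measure Ω}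
    [IsProbabilityMeasure P] {f g : Ω → α} {u v : Ω → β}
    (hf : Measurable f) (hg : Measurable g) (hu : Measurable u) (hv : Measurable v)
    (hfg : IndepFun f g P) (huv : IndepFun u v P) (hfu : IndepFun f u P)
    (hgv : IndepFun g v P)
    (hbig : IndepFun (fun ω => (f ω, g ω)) (fun ω => (u ω, v ω)) P) :
    IndepFun (fun ω => (f ω, u ω)) (fun ω => (g ω, v ω)) P := by
  haveI := Measure.isProbabilityMeasure_map hf.aemeasurable (μ := P)
  haveI := Measure.isProbabilityMeasure_map hg.aemeasurable (μ := P)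
  haveI := Measure.isProbabilityMeasure_map hu.aemeasurable (μ := P)
  haveI := Measure.isProbabilityMeasure_map hv.aemeasurable (μ := P)
  rw [indepFun_iff_map_prod_eq_prod_map_map ((hf.prodMk hu).aemeasurable)
    ((hg.prodMk hv).aemeasurable)]
  have h1 := (indepFun_iff_map_prod_eq_prod_map_map ((hf.prodMk hg).aemeasurable)
    ((hu.prodMk hv).aemeasurable)).mp hbig
  have h2 := (indepFun_iff_map_prod_eq_prod_map_map hf.aemeasurable hg.aemeasurable).mp hfg
  have h3 := (indepFun_iff_map_prod_eq_prod_map_map hu.aemeasurable hv.aemeasurable).mp huv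
  have h4 := (indepFun_iff_map_prod_eq_prod_map_map hf.aemeasurable hu.aemeasurable).mp hfu
  have h5 := (indepFun_iff_map_prod_eq_prod_map_map hg.aemeasurable hv.aemeasurable).mp hgv
  have hcomp : (fun ω => ((f ω, u ω), (g ω, v ω)))
      = (fun q : (α × α) × (β × β) => ((q.1.1, q.2.1), (q.1.2, q.2.2)))
        ∘ (fun ω => ((f ω, g ω), (u ω, v ω))) := rfl
  rw [hcomp, ← Measure.map_map ((measurable_fst.fst.prodMk measurable_snd.fst).prodMk (measurable_fst.snd.prodMk measurable_snd.snd)) ((hf.prodMk hg).prodMk (hu.prodMk hv)),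
    h1, h2, h3, h4, h5]
  exact (measurePreserving_middleInterchange (P.map f) (P.map g) (P.map u) (P.map v)).map_eq

theorem identDistrib_prodMk {Ω : Type*} [MeasurableSpace Ω] {P : Measure Ω}
    [IsFiniteMeasure P] {f f' : Ω → α} {u u' : Ω → β}
    (hf : Measurable f) (hf' : Measurable f') (hu : Measurable u) (hu' : Measurable u')
    (hff' : IdentDistrib f f' P P) (huu' : IdentDistrib u u' P P)
    (h1 : IndepFun f u P) (h2 : IndepFun f' u' P) :
    IdentDistrib (fun ω => (f ω, u ω)) (fun ω => (f' ω, u' ω)) P P := by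
  refine ⟨(hf.prodMk hu).aemeasurable, (hf'.prodMk hu').aemeasurable, ?_⟩
  rw [(indepFun_iff_map_prod_eq_prod_map_map hf.aemeasurable hu.aemeasurable).mp h1,
      (indepFun_iff_map_prod_eq_prod_map_map hf'.aemeasurable hu'.aemeasurable).mp h2,
      hff'.map_eq, huu'.map_eq]

end ProbAux
set_option maxHeartbeats 1000000 in
/-- Theorem, part (iv): if `G'(ψ) ≤ ψ` then almost surely
`dim̲_Φ μ_ω ≤ ψ` for every large dimension function `Φ`. -/
theorem lowerPhiDim_le_of_G'_le {Ω : Type*} [MeasurableSpace Ω] (P : Measure Ω) [IsProbabilityMeasure P]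
    (A B : ℝ) (hA : 0 < A) (hAB : A < B) (hB1 : B < 1)
    (S : MoranSystem Ω P A B) (μ : Ω → Measure ℝ)
    (hμ : ∀ ω, IsMoranMeasure (S.a ω) (S.b ω) (S.p ω) (μ ω))
    (ψ : ℝ) (hψ : 0 < ψ) (hG : Gfn' P S.a S.b S.p ψ ≤ ψ) :
    ∃ Γ : Set Ω, P Γᶜ = 0 ∧ ∀ Φ : ℝ → ℝ, LargeDimFn Φ → ∀ ω ∈ Γ,
      lowerPhiDim Φ (μ ω) ≤ ENNReal.ofReal ψ := by
  classical
  have hB0 : 0 < B := hA.trans hAB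
  have hA1 : A < 1 := hAB.trans hB1
  have hlogB : Real.log B < 0 := Real.log_neg hB0 hB1
  have hlogA : Real.log A < 0 := Real.log_neg hA hA1
  -- pointwise range facts
  have haA : ∀ ω' n, A ≤ S.a ω' n := fun ω' n => (le_min_iff.mp (S.range_ab ω' n).1).1
  have hbA : ∀ ω' n, A ≤ S.b ω' n := fun ω' n => (le_min_iff.mp (S.range_ab ω' n).1).2
  have habB : ∀ ω' n, S.a ω' n + S.b ω' n ≤ B := fun ω' n => (S.range_ab ω' n).2
  have ha0 : ∀ ω' n, 0 < S.a ω' n := fun ω' n => lt_of_lt_of_le hA (haA ω' n)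
  have hb0 : ∀ ω' n, 0 < S.b ω' n := fun ω' n => lt_of_lt_of_le hA (hbA ω' n)
  have haB : ∀ ω' n, S.a ω' n ≤ B := fun ω' n => by
    have h1 := habB ω' n; have h2 := hb0 ω' n; linarith
  have hbB : ∀ ω' n, S.b ω' n ≤ B := fun ω' n => by
    have h1 := habB ω' n; have h2 := ha0 ω' n; linarith
  have ha1 : ∀ ω' n, S.a ω' n ≤ 1 := fun ω' n => (haB ω' n).trans hB1.le
  have hb1 : ∀ ω' n, S.b ω' n ≤ 1 := fun ω' n => (hbB ω' n).trans hB1.le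
  have hp0 : ∀ ω' n, 0 ≤ S.p ω' n := fun ω' n => (S.range_p ω' n).1
  have hp1 : ∀ ω' n, S.p ω' n ≤ 1 := fun ω' n => (S.range_p ω' n).2
  -- threshold facts
  have hthr : ∀ ω' n, A ^ ψ / 2 ≤ S.a ω' n ^ ψ / (S.a ω' n ^ ψ + S.b ω' n ^ ψ)
      ∧ A ^ ψ / 2 ≤ 1 - S.a ω' n ^ ψ / (S.a ω' n ^ ψ + S.b ω' n ^ ψ)
      ∧ S.a ω' n ^ ψ / (S.a ω' n ^ ψ + S.b ω' n ^ ψ) < 1 := by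
    intro ω' n
    have hA0 : (0:ℝ) < A ^ ψ := Real.rpow_pos_of_pos hA ψ
    have hapos : 0 < S.a ω' n ^ ψ := Real.rpow_pos_of_pos (ha0 ω' n) ψ
    have hbpos : 0 < S.b ω' n ^ ψ := Real.rpow_pos_of_pos (hb0 ω' n) ψ
    have haA' : A ^ ψ ≤ S.a ω' n ^ ψ := Real.rpow_le_rpow hA.le (haA ω' n) hψ.le
    have hbA' : A ^ ψ ≤ S.b ω' n ^ ψ := Real.rpow_le_rpow hA.le (hbA ω' n) hψ.le
    have ha1' : S.a ω' n ^ ψ ≤ 1 := Real.rpow_le_one (ha0 ω' n).le (ha1 ω' n) hψ.le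
    have hb1' : S.b ω' n ^ ψ ≤ 1 := Real.rpow_le_one (hb0 ω' n).le (hb1 ω' n) hψ.le
    have hsum : 0 < S.a ω' n ^ ψ + S.b ω' n ^ ψ := by linarith
    refine ⟨?_, ?_, ?_⟩
    · rw [div_le_div_iff₀ (by norm_num) hsum]; nlinarith
    · have heq : 1 - S.a ω' n ^ ψ / (S.a ω' n ^ ψ + S.b ω' n ^ ψ)
          = S.b ω' n ^ ψ / (S.a ω' n ^ ψ + S.b ω' n ^ ψ) := by
        field_simp
        ring
      rw [heq, div_le_div_iff₀ (by norm_num) hsum]; nlinarith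
    · rw [div_lt_one hsum]; linarith
  -- bounds on Y'
  have hYb : ∀ ω' n, ψ * Real.log A - Real.log 2 ≤ Yrv' S.a S.b S.p ψ n ω'
      ∧ Yrv' S.a S.b S.p ψ n ω' ≤ 0 := by
    intro ω' n
    obtain ⟨h1, h2, h3⟩ := hthr ω' n
    have hA2 : (0:ℝ) < A ^ ψ / 2 := by positivity
    have hlogA2 : Real.log (A ^ ψ / 2) = ψ * Real.log A - Real.log 2 := by
      rw [Real.log_div (ne_of_gt (Real.rpow_pos_of_pos hA ψ)) (by norm_num), Real.log_rpow hA]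
    simp only [Yrv']
    split_ifs with h
    · constructor
      · rw [← hlogA2]; exact Real.log_le_log hA2 (le_trans h1 h)
      · exact Real.log_nonpos (hp0 ω' n) (hp1 ω' n)
    · push_neg at h
      have h1p : A ^ ψ / 2 ≤ 1 - S.p ω' n := by linarith
      constructor
      · rw [← hlogA2]; exact Real.log_le_log hA2 h1p
      · exact Real.log_nonpos (by linarith [hp0 ω' n]) (by linarith [hp0 ω' n])
  -- bounds on Z'
  have hZb : ∀ ω' n, Real.log A ≤ Zrv' S.a S.b S.p ψ n ω'
      ∧ Zrv' S.a S.b S.p ψ n ω' ≤ Real.log B := by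
    intro ω' n
    simp only [Zrv']
    split_ifs with h
    · exact ⟨Real.log_le_log hA (haA ω' n), Real.log_le_log (ha0 ω' n) (haB ω' n)⟩
    · exact ⟨Real.log_le_log hA (hbA ω' n), Real.log_le_log (hb0 ω' n) (hbB ω' n)⟩
  -- measurability
  have hameas : ∀ n, Measurable fun ω' => S.a ω' n := fun n => measurable_fst.comp (S.meas_ab n)
  have hbmeas : ∀ n, Measurable fun ω' => S.b ω' n := fun n => measurable_snd.comp (S.meas_ab n)
  have hrpow : Measurable fun x : ℝ => x ^ ψ := (Real.continuous_rpow_const hψ.le).measurable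
  have hcondmeas : ∀ n, MeasurableSet
      {ω' | S.a ω' n ^ ψ / (S.a ω' n ^ ψ + S.b ω' n ^ ψ) ≤ S.p ω' n} := fun n =>
    measurableSet_le (((hrpow.comp (hameas n)).div
      ((hrpow.comp (hameas n)).add (hrpow.comp (hbmeas n))))) (S.meas_p n)
  have hYmeas : ∀ n, Measurable (Yrv' S.a S.b S.p ψ n) := fun n =>
    Measurable.ite (hcondmeas n) (Real.measurable_log.comp (S.meas_p n))
      (Real.measurable_log.comp (measurable_const.sub (S.meas_p n)))
  have hZmeas : ∀ n, Measurable (Zrv' S.a S.b S.p ψ n) := fun n =>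
    Measurable.ite (hcondmeas n) (Real.measurable_log.comp (hameas n))
      (Real.measurable_log.comp (hbmeas n))
  -- independence of triples
  have habp : ∀ i j : ℕ, IndepFun (fun ω' => (S.a ω' i, S.b ω' i)) (fun ω' => S.p ω' j) P :=
    fun i j => S.indep_ab_p.comp (measurable_pi_apply i) (measurable_pi_apply j)
  have hbig : ∀ i j : ℕ, IndepFun (fun ω' => ((S.a ω' i, S.b ω' i), (S.a ω' j, S.b ω' j)))
      (fun ω' => (S.p ω' i, S.p ω' j)) P := fun i j =>
    S.indep_ab_p.comp ((measurable_pi_apply i).prodMk (measurable_pi_apply j))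
      ((measurable_pi_apply i).prodMk (measurable_pi_apply j))
  have htripindep : ∀ i j : ℕ, i ≠ j →
      IndepFun (fun ω' => ((S.a ω' i, S.b ω' i), S.p ω' i))
        (fun ω' => ((S.a ω' j, S.b ω' j), S.p ω' j)) P := fun i j hij =>
    indepFun_prodMk_prodMk (S.meas_ab i) (S.meas_ab j) (S.meas_p i) (S.meas_p j)
      (S.indep_ab.indepFun hij) (S.indep_p.indepFun hij) (habp i i) (habp j j) (hbig i j)
  have htripident : ∀ n : ℕ, IdentDistrib (fun ω' => ((S.a ω' n, S.b ω' n), S.p ω' n))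
      (fun ω' => ((S.a ω' 1, S.b ω' 1), S.p ω' 1)) P P := fun n =>
    identDistrib_prodMk (S.meas_ab n) (S.meas_ab 1) (S.meas_p n) (S.meas_p 1)
      (S.ident_ab n) (S.ident_p n) (habp n n) (habp 1 1)
  -- the random variables for the SLLN
  set ε : ℕ → ℝ := fun K => 1 / ((K:ℝ) + 1) with hεdef
  have hεpos : ∀ K, 0 < ε K := fun K => by positivity
  have hεle1 : ∀ K, ε K ≤ 1 := fun K => by
    rw [hεdef]
    rw [div_le_one (by positivity)]
    have : (0:ℝ) ≤ (K:ℝ) := Nat.cast_nonneg K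
    linarith
  set X : ℕ → ℕ → Ω → ℝ := fun K j ω' =>
    (ψ + ε K) * Zrv' S.a S.b S.p ψ (j+1) ω' - Yrv' S.a S.b S.p ψ (j+1) ω' with hXdef
  have hXmeas : ∀ K j, Measurable (X K j) := fun K j =>
    ((hZmeas (j+1)).const_mul _).sub (hYmeas (j+1))
  have hmlA : (0:ℝ) ≤ -Real.log A := by linarith
  have hlog2 : (0:ℝ) ≤ Real.log 2 := Real.log_nonneg one_le_two
  have hψlA : 0 ≤ ψ * (-Real.log A) := mul_nonneg hψ.le hmlA
  have hYabs : ∀ ω' n, ‖Yrv' S.a S.b S.p ψ n ω'‖ ≤ Real.log 2 - ψ * Real.log A := by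
    intro ω' n
    obtain ⟨hy1, hy2⟩ := hYb ω' n
    rw [Real.norm_eq_abs]
    exact abs_le.2 ⟨by linarith, by linarith⟩
  have hZabs : ∀ ω' n, ‖Zrv' S.a S.b S.p ψ n ω'‖ ≤ -Real.log A := by
    intro ω' n
    obtain ⟨hz1, hz2⟩ := hZb ω' n
    rw [Real.norm_eq_abs]
    exact abs_le.2 ⟨by linarith, by linarith⟩
  have hXint : ∀ K j, Integrable (X K j) P := by
    intro K j
    refine (integrable_const ((ψ + 1) * (-Real.log A) + (Real.log 2 - ψ * Real.log A))).mono'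
      ((hXmeas K j).aestronglyMeasurable) (ae_of_all _ ?_)
    intro ω'
    rw [hXdef]
    simp only [Real.norm_eq_abs]
    have h1 : |(ψ + ε K) * Zrv' S.a S.b S.p ψ (j+1) ω'| ≤ (ψ + 1) * (-Real.log A) := by
      rw [abs_mul, abs_of_pos (by linarith [hεpos K] : (0:ℝ) < ψ + ε K)]
      have := hZabs ω' (j+1)
      rw [Real.norm_eq_abs] at this
      have hle : ψ + ε K ≤ ψ + 1 := by linarith [hεle1 K]
      exact mul_le_mul hle this (abs_nonneg _) (by linarith)
    have h2 := hYabs ω' (j+1)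
    rw [Real.norm_eq_abs] at h2
    calc |(ψ + ε K) * Zrv' S.a S.b S.p ψ (j+1) ω' - Yrv' S.a S.b S.p ψ (j+1) ω'|
        ≤ |(ψ + ε K) * Zrv' S.a S.b S.p ψ (j+1) ω'| + |Yrv' S.a S.b S.p ψ (j+1) ω'| :=
          abs_sub _ _
      _ ≤ (ψ + 1) * (-Real.log A) + (Real.log 2 - ψ * Real.log A) := by linarith
  -- X K j as a composition
  have hgX : ∀ K, ∃ g : ((ℝ × ℝ) × ℝ) → ℝ, Measurable g ∧
      ∀ j, X K j = g ∘ (fun ω' => ((S.a ω' (j+1), S.b ω' (j+1)), S.p ω' (j+1))) := by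
    intro K
    refine ⟨fun q =>
      (ψ + ε K) * (if q.1.1 ^ ψ / (q.1.1 ^ ψ + q.1.2 ^ ψ) ≤ q.2 then Real.log q.1.1
        else Real.log q.1.2)
      - (if q.1.1 ^ ψ / (q.1.1 ^ ψ + q.1.2 ^ ψ) ≤ q.2 then Real.log q.2
        else Real.log (1 - q.2)), ?_, fun j => rfl⟩
    have hbase : Measurable fun q : (ℝ × ℝ) × ℝ => q.1.1 ^ ψ / (q.1.1 ^ ψ + q.1.2 ^ ψ) :=
      (hrpow.comp (measurable_fst.fst)).div
        ((hrpow.comp measurable_fst.fst).add (hrpow.comp measurable_fst.snd))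
    have hc : MeasurableSet {q : (ℝ × ℝ) × ℝ | q.1.1 ^ ψ / (q.1.1 ^ ψ + q.1.2 ^ ψ) ≤ q.2} :=
      measurableSet_le hbase measurable_snd
    exact ((Measurable.ite hc (Real.measurable_log.comp measurable_fst.fst)
      (Real.measurable_log.comp measurable_fst.snd)).const_mul _).sub
      (Measurable.ite hc (Real.measurable_log.comp measurable_snd)
        (Real.measurable_log.comp (measurable_const.sub measurable_snd)))
  have hXindep : ∀ K, Pairwise (Function.onFun (IndepFun · · P) (X K)) := by
    intro K i j hij
    obtain ⟨g, hgmeas, hgeq⟩ := hgX K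
    have h := (htripindep (i+1) (j+1) (by omega)).comp hgmeas hgmeas
    rw [Function.onFun, hgeq i, hgeq j]
    exact h
  have hXident : ∀ K i, IdentDistrib (X K i) (X K 0) P P := by
    intro K i
    obtain ⟨g, hgmeas, hgeq⟩ := hgX K
    rw [hgeq i, hgeq 0]
    exact (htripident (i+1)).comp hgmeas
  -- expectations
  have hYint : Integrable (Yrv' S.a S.b S.p ψ 1) P :=
    (integrable_const (Real.log 2 - ψ * Real.log A)).mono'
      ((hYmeas 1).aestronglyMeasurable) (ae_of_all _ (fun ω' => hYabs ω' 1))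
  have hZint : Integrable (Zrv' S.a S.b S.p ψ 1) P :=
    (integrable_const (-Real.log A)).mono'
      ((hZmeas 1).aestronglyMeasurable) (ae_of_all _ (fun ω' => hZabs ω' 1))
  set EY := ∫ ω', Yrv' S.a S.b S.p ψ 1 ω' ∂P with hEYdef
  set EZ := ∫ ω', Zrv' S.a S.b S.p ψ 1 ω' ∂P with hEZdef
  have hEZB : EZ ≤ Real.log B := by
    rw [hEZdef]
    calc ∫ ω', Zrv' S.a S.b S.p ψ 1 ω' ∂P ≤ ∫ _, Real.log B ∂P :=
          integral_mono hZint (integrable_const _) (fun ω' => (hZb ω' 1).2)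
      _ = Real.log B := by simp
  have hEZneg : EZ < 0 := lt_of_le_of_lt hEZB hlogB
  have hψEZ : ψ * EZ ≤ EY := by
    have hGG : EY / EZ ≤ ψ := hG
    rwa [div_le_iff_of_neg hEZneg] at hGG
  have hEXval : ∀ K, P[X K 0] = (ψ + ε K) * EZ - EY := by
    intro K
    have h1 : Integrable (fun ω' => (ψ + ε K) * Zrv' S.a S.b S.p ψ 1 ω') P :=
      hZint.const_mul _
    calc P[X K 0] = ∫ ω', ((ψ + ε K) * Zrv' S.a S.b S.p ψ 1 ω'
          - Yrv' S.a S.b S.p ψ 1 ω') ∂P := rfl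
      _ = (∫ ω', (ψ + ε K) * Zrv' S.a S.b S.p ψ 1 ω' ∂P) - ∫ ω', Yrv' S.a S.b S.p ψ 1 ω' ∂P :=
          integral_sub h1 hYint
      _ = (ψ + ε K) * EZ - EY := by rw [integral_const_mul]
  have hEXneg : ∀ K, P[X K 0] < 0 := by
    intro K
    rw [hEXval K]
    have h1 : (ψ + ε K) * EZ - ψ * EZ = ε K * EZ := by ring
    have h2 : ε K * EZ < 0 := mul_neg_of_pos_of_neg (hεpos K) hEZneg
    linarith
  -- the almost sure set
  have hSLLN : ∀ᵐ ω' ∂P, ∀ K : ℕ, Tendsto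
      (fun n : ℕ => (n:ℝ)⁻¹ • ∑ j ∈ Finset.range n, X K j ω') atTop (nhds (P[X K 0])) :=
    ae_all_iff.2 fun K => strong_law_ae (X K) (hXint K 0) (hXindep K) (hXident K)
  refine ⟨{ω' | ∀ K : ℕ, Tendsto
      (fun n : ℕ => (n:ℝ)⁻¹ • ∑ j ∈ Finset.range n, X K j ω') atTop (nhds (P[X K 0]))}, ?_, ?_⟩
  · rw [Set.compl_setOf]
    exact ae_iff.mp hSLLN
  intro Φ hΦ ω hω
  obtain ⟨⟨hΦ0, hΦmono, hΦtend⟩, -⟩ := hΦ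
  obtain ⟨hprob, hsupp, hmassv⟩ := hμ ω
  haveI : IsProbabilityMeasure (μ ω) := hprob
  -- abbreviations (ω fixed)
  set SZ : ℕ → ℝ := fun n => ∑ j ∈ Finset.range n, Zrv' S.a S.b S.p ψ (j+1) ω with hSZdef
  set SY : ℕ → ℝ := fun n => ∑ j ∈ Finset.range n, Yrv' S.a S.b S.p ψ (j+1) ω with hSYdef
  -- the greedy point and its ball estimates
  have hgeom : ∃ x : ℝ, x ∈ measSupport (μ ω) ∧
      (∀ m r, Real.exp (SZ m) < r →
        ENNReal.ofReal (Real.exp (SY m)) ≤ μ ω (ball x r)) ∧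
      (∀ n, μ ω (ball x ((1 - B) * Real.exp (SZ n)))
        ≤ ENNReal.ofReal (Real.exp (SY n))) := by
    set cdig : ℕ → Bool := fun n =>
      decide (S.p ω n < S.a ω n ^ ψ / (S.a ω n ^ ψ + S.b ω n ^ ψ)) with hcdig
    have hexpZ : ∀ k, Real.exp (Zrv' S.a S.b S.p ψ k ω)
        = (if cdig k then S.b ω k else S.a ω k) := by
      intro k
      by_cases h : S.a ω k ^ ψ / (S.a ω k ^ ψ + S.b ω k ^ ψ) ≤ S.p ω k
      · have hc : cdig k = false := by
          simp only [hcdig, decide_eq_false_iff_not]; exact not_lt.2 h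
        rw [hc, if_neg Bool.false_ne_true]
        simp only [Zrv', if_pos h]
        exact Real.exp_log (ha0 ω k)
      · have hc : cdig k = true := by
          simp only [hcdig, decide_eq_true_eq]; exact lt_of_not_ge h
        rw [hc, if_pos rfl]
        simp only [Zrv', if_neg h]
        exact Real.exp_log (hb0 ω k)
    have hexpY : ∀ k, Real.exp (Yrv' S.a S.b S.p ψ k ω)
        = (if cdig k then 1 - S.p ω k else S.p ω k) := by
      intro k
      obtain ⟨h1, h2, h3⟩ := hthr ω k
      have hA2 : (0:ℝ) < A ^ ψ / 2 := by positivity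
      by_cases h : S.a ω k ^ ψ / (S.a ω k ^ ψ + S.b ω k ^ ψ) ≤ S.p ω k
      · have hc : cdig k = false := by
          simp only [hcdig, decide_eq_false_iff_not]; exact not_lt.2 h
        rw [hc, if_neg Bool.false_ne_true]
        simp only [Yrv', if_pos h]
        exact Real.exp_log (lt_of_lt_of_le hA2 (h1.trans h))
      · have hc : cdig k = true := by
          simp only [hcdig, decide_eq_true_eq]; exact lt_of_not_ge h
        rw [hc, if_pos rfl]
        simp only [Yrv', if_neg h]
        push_neg at h
        exact Real.exp_log (by linarith)
    have ha0' : ∀ n, 0 ≤ S.a ω n := fun n => (ha0 ω n).le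
    have hb0' : ∀ n, 0 ≤ S.b ω n := fun n => (hb0 ω n).le
    have hab1 : ∀ n, S.a ω n + S.b ω n ≤ 1 := fun n => (habB ω n).trans hB1.le
    have hlenL : ∀ n, moranLenAux (S.a ω) (S.b ω) 0 1 (moranDigs cdig 0 n)
        = Real.exp (SZ n) := by
      intro n
      rw [moranLenAux_digs, one_mul]
      simp only [hSZdef]
      rw [Real.exp_sum]
      refine Finset.prod_congr rfl fun j _ => ?_
      simp only [Nat.zero_add]
      exact (hexpZ (j+1)).symm
    have hmassM : ∀ n, moranMassAux (S.p ω) 0 1 (moranDigs cdig 0 n)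
        = Real.exp (SY n) := by
      intro n
      rw [moranMassAux_digs, one_mul]
      simp only [hSYdef]
      rw [Real.exp_sum]
      refine Finset.prod_congr rfl fun j _ => ?_
      simp only [Nat.zero_add]
      exact (hexpY (j+1)).symm
    have hacc2 : ∀ n, (moranAcc (S.a ω) (S.b ω) 0 (0,1) (moranDigs cdig 0 n)).2
        = Real.exp (SZ n) := fun n => by
      rw [← moranLenAux_eq_acc (S.a ω) (S.b ω) (moranDigs cdig 0 n) 0 0 1, hlenL n]
    have hstep : ∀ n n', n ≤ n' →
        (moranAcc (S.a ω) (S.b ω) 0 (0,1) (moranDigs cdig 0 n)).1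
          ≤ (moranAcc (S.a ω) (S.b ω) 0 (0,1) (moranDigs cdig 0 n')).1
        ∧ (moranAcc (S.a ω) (S.b ω) 0 (0,1) (moranDigs cdig 0 n')).1 + Real.exp (SZ n')
          ≤ (moranAcc (S.a ω) (S.b ω) 0 (0,1) (moranDigs cdig 0 n)).1 + Real.exp (SZ n) := by
      intro n n' hnn
      have h2 : n + (n' - n) = n' := by omega
      have hds : moranDigs cdig 0 n' = moranDigs cdig 0 n ++ moranDigs cdig n (n' - n) := by
        have h := moranDigs_append cdig n (n' - n) 0
        rw [h2] at h
        simpa using h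
      have hA' : moranAcc (S.a ω) (S.b ω) 0 (0,1) (moranDigs cdig 0 n')
          = moranAcc (S.a ω) (S.b ω) n
              (moranAcc (S.a ω) (S.b ω) 0 (0,1) (moranDigs cdig 0 n))
              (moranDigs cdig n (n' - n)) := by
        rw [hds, moranAcc_append, length_moranDigs, Nat.zero_add]
      have hpair : moranAcc (S.a ω) (S.b ω) 0 (0,1) (moranDigs cdig 0 n)
          = ((moranAcc (S.a ω) (S.b ω) 0 (0,1) (moranDigs cdig 0 n)).1,
              Real.exp (SZ n)) := by
        rw [← hacc2 n]
      have hbd := moranAcc_bounds ha0' hb0' hab1 (moranDigs cdig n (n' - n)) n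
        ((moranAcc (S.a ω) (S.b ω) 0 (0,1) (moranDigs cdig 0 n)).1)
        (Real.exp (SZ n)) (Real.exp_pos _).le
      rw [← hpair, ← hA'] at hbd
      rw [hacc2 n'] at hbd
      exact ⟨hbd.1, hbd.2.1⟩
    set lep : ℕ → ℝ :=
      fun n => (moranAcc (S.a ω) (S.b ω) 0 (0,1) (moranDigs cdig 0 n)).1 with hlepdef
    have hub : ∀ m n, lep m ≤ lep n + Real.exp (SZ n) := by
      intro m n
      rcases le_total m n with h | h
      · have := (hstep m n h).1
        linarith [Real.exp_pos (SZ n)]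
      · have := (hstep n m h).2
        linarith [Real.exp_pos (SZ m)]
    have hbdd : BddAbove (Set.range lep) := ⟨lep 0 + Real.exp (SZ 0), by
      rintro y ⟨m, rfl⟩; exact hub m 0⟩
    set x : ℝ := ⨆ n, lep n with hxdef
    have hxmem : ∀ n, lep n ≤ x ∧ x ≤ lep n + Real.exp (SZ n) := fun n =>
      ⟨le_ciSup hbdd n, ciSup_le fun m => hub m n⟩
    have hIcc : ∀ n, moranInt (S.a ω) (S.b ω) (moranDigs cdig 0 n)
        = Icc (lep n) (lep n + Real.exp (SZ n)) := by
      intro n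
      rw [moranInt, moranAux_eq_Icc, hacc2 n]
    have hxin : ∀ n, x ∈ moranInt (S.a ω) (S.b ω) (moranDigs cdig 0 n) := by
      intro n; rw [hIcc n]; exact ⟨(hxmem n).1, (hxmem n).2⟩
    refine ⟨x, ?_, ?_, ?_⟩
    · rw [hsupp, moranSet]
      refine Set.mem_iInter.2 fun n => ?_
      exact Set.mem_biUnion
        (show (moranDigs cdig 0 n) ∈ {v : List Bool | v.length = n} from
          length_moranDigs cdig n 0) (hxin n)
    · intro m r hr
      have hsub : moranInt (S.a ω) (S.b ω) (moranDigs cdig 0 m) ⊆ ball x r := by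
        rw [hIcc m]
        intro y hy
        rw [mem_ball, Real.dist_eq, abs_sub_lt_iff]
        have h1 := (hxmem m).1; have h2 := (hxmem m).2
        exact ⟨by linarith [hy.1, hy.2], by linarith [hy.1, hy.2]⟩
      calc ENNReal.ofReal (Real.exp (SY m))
          = μ ω (moranInt (S.a ω) (S.b ω) (moranDigs cdig 0 m)) := by
            rw [hmassv (moranDigs cdig 0 m), moranMass, hmassM m]
        _ ≤ μ ω (ball x r) := measure_mono hsub
    · intro n
      have hsep := moranSep ha0' hb0' (habB ω) hB1.le
      have hlen_pos : ∀ v : List Bool, 0 < moranLenAux (S.a ω) (S.b ω) 0 1 v := by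
        intro v
        rw [moranLenAux_eq_acc (S.a ω) (S.b ω) v 0 0 1]
        exact moranAcc_len_pos (ha0 ω) (hb0 ω) v 0 0 1 one_pos
      have hmeasI : ∀ v : List Bool, MeasurableSet (moranInt (S.a ω) (S.b ω) v) := by
        intro v; rw [moranInt, moranAux_eq_Icc]; exact measurableSet_Icc
      have hdisjU : μ ω ((⋃ v ∈ moranStrs n, moranInt (S.a ω) (S.b ω) v)ᶜ) = 0 := by
        have hdisj : (↑(moranStrs n) : Set (List Bool)).PairwiseDisjoint
            (fun v => moranInt (S.a ω) (S.b ω) v) := by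
          intro v hv w hw hvw
          refine Set.disjoint_left.2 fun z hz1 hz2 => ?_
          have hlv : v.length = n := (mem_moranStrs n v).1 hv
          have hlw : w.length = n := (mem_moranStrs n w).1 hw
          have h := hsep v w 0 0 1 zero_le_one (by rw [hlv, hlw]) hvw z hz1 z hz2
          simp only [sub_self, abs_zero] at h
          have := mul_pos (show (0:ℝ) < 1 - B by linarith) (hlen_pos v)
          linarith
        have hUeq : μ ω (⋃ v ∈ moranStrs n, moranInt (S.a ω) (S.b ω) v) = 1 := by
          rw [measure_biUnion_finset hdisj (fun v _ => hmeasI v)]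
          have hcong : ∀ v ∈ moranStrs n, μ ω (moranInt (S.a ω) (S.b ω) v)
              = ENNReal.ofReal (moranMassAux (S.p ω) 0 1 v) := fun v _ => hmassv v
          rw [Finset.sum_congr rfl hcong,
            ← ENNReal.ofReal_sum_of_nonneg
              (fun v _ => moranMassAux_nonneg (fun k => ⟨hp0 ω k, hp1 ω k⟩) v 0 1 zero_le_one),
            sum_moranMassAux (S.p ω) n 0 1, ENNReal.ofReal_one]
        rw [prob_compl_eq_zero_iff (Finset.measurableSet_biUnion _ (fun v _ => hmeasI v))]
        exact hUeq
      have hsub : ball x ((1 - B) * Real.exp (SZ n)) ⊆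
          moranInt (S.a ω) (S.b ω) (moranDigs cdig 0 n)
            ∪ (⋃ v ∈ moranStrs n, moranInt (S.a ω) (S.b ω) v)ᶜ := by
        intro y hy
        by_cases hyU : y ∈ ⋃ v ∈ moranStrs n, moranInt (S.a ω) (S.b ω) v
        · left
          obtain ⟨v, hv, hyv⟩ := Set.mem_iUnion₂.1 hyU
          by_cases hveq : v = moranDigs cdig 0 n
          · rwa [hveq] at hyv
          · exfalso
            have hlv : v.length = n := (mem_moranStrs n v).1 hv
            have h := hsep (moranDigs cdig 0 n) v 0 0 1 zero_le_one
              (by rw [length_moranDigs, hlv]) (fun hh => hveq hh.symm) x (hxin n) y hyv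
            rw [hlenL n] at h
            rw [mem_ball, Real.dist_eq, abs_sub_comm] at hy
            linarith
        · right; exact hyU
      calc μ ω (ball x ((1 - B) * Real.exp (SZ n)))
          ≤ μ ω (moranInt (S.a ω) (S.b ω) (moranDigs cdig 0 n)
              ∪ (⋃ v ∈ moranStrs n, moranInt (S.a ω) (S.b ω) v)ᶜ) := measure_mono hsub
        _ ≤ μ ω (moranInt (S.a ω) (S.b ω) (moranDigs cdig 0 n))
            + μ ω ((⋃ v ∈ moranStrs n, moranInt (S.a ω) (S.b ω) v)ᶜ) := measure_union_le _ _
        _ = ENNReal.ofReal (Real.exp (SY n)) := by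
            rw [hdisjU, add_zero, hmassv (moranDigs cdig 0 n), moranMass, hmassM n]
  obtain ⟨x, hxsupp, hball_low, hball_up⟩ := hgeom
  -- main dimension bound
  rw [lowerPhiDim]
  refine iSup_le fun d => iSup_le fun hd => ?_
  rcases le_or_gt d ψ with hdψ | hdψ
  · exact ENNReal.ofReal_le_ofReal hdψ
  exfalso
  obtain ⟨C₁, hC₁, C₂, hC₂, hadm⟩ := hd
  obtain ⟨K, hK⟩ := exists_nat_one_div_lt (sub_pos.2 hdψ)
  have hKε : ε K < d - ψ := by simp only [hεdef]; exact hK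
  set T : ℕ → ℝ := fun n => ∑ j ∈ Finset.range n, X K j ω with hTdef
  have hT : Tendsto (fun n : ℕ => (n:ℝ)⁻¹ * T n) atTop (nhds (P[X K 0])) := by
    simpa [hTdef, smul_eq_mul] using hω K
  have hTsum : ∀ n, T n = (ψ + ε K) * SZ n - SY n := by
    intro n
    simp only [hTdef, hXdef, hSZdef, hSYdef]
    rw [Finset.mul_sum, ← Finset.sum_sub_distrib]
  have hEXK := hEXneg K
  have hTbot : Tendsto T atTop atBot := by
    have hev : ∀ᶠ n : ℕ in atTop, (n:ℝ)⁻¹ * T n < P[X K 0] / 2 :=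
      hT.eventually_lt_const (by linarith)
    have hmul : Tendsto (fun n : ℕ => (n:ℝ) * (P[X K 0] / 2)) atTop atBot :=
      tendsto_natCast_atTop_atTop.atTop_mul_const_of_neg (by linarith)
    apply tendsto_atBot_mono' atTop ?_ hmul
    filter_upwards [hev, eventually_ge_atTop 1] with n h1 h2
    have hn : (0:ℝ) < n := by exact_mod_cast h2
    have heq : T n = (n:ℝ) * ((n:ℝ)⁻¹ * T n) := by field_simp
    rw [heq]
    exact mul_le_mul_of_nonneg_left h1.le hn.le
  have hZle : ∀ n : ℕ, SZ n ≤ n * Real.log B := by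
    intro n
    simp only [hSZdef]
    calc (∑ j ∈ Finset.range n, Zrv' S.a S.b S.p ψ (j+1) ω)
        ≤ ∑ _j ∈ Finset.range n, Real.log B := Finset.sum_le_sum fun j _ => (hZb ω (j+1)).2
      _ = n * Real.log B := by rw [Finset.sum_const, Finset.card_range, nsmul_eq_mul]
  have hLto : Tendsto (fun n => Real.exp (SZ n)) atTop (nhds 0) := by
    apply Real.tendsto_exp_atBot.comp
    apply tendsto_atBot_mono hZle
    exact tendsto_natCast_atTop_atTop.atTop_mul_const_of_neg hlogB
  obtain ⟨n₀, hn₀⟩ := (hLto.eventually_lt_const hC₁).exists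
  have hLn₀pos : (0:ℝ) < Real.exp (SZ n₀) := Real.exp_pos _
  set R : ℝ := (1 - B) * Real.exp (SZ n₀) with hRdef
  have hR0 : 0 < R := mul_pos (by linarith) hLn₀pos
  have hL1 : ∀ n : ℕ, Real.exp (SZ n) ≤ 1 := by
    intro n
    rw [← Real.exp_zero]
    apply Real.exp_le_exp.2
    have h2 : (n:ℝ) * Real.log B ≤ 0 := by nlinarith [hlogB.le, (Nat.cast_nonneg n : (0:ℝ) ≤ (n:ℝ))]
    linarith [hZle n]
  have hR1 : R < 1 := by rw [hRdef]; nlinarith [hL1 n₀, hLn₀pos]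
  have hRC₁ : R ≤ C₁ := by rw [hRdef]; nlinarith [hLn₀pos, hn₀]
  have hΦR : 0 ≤ Φ R := hΦ0 R ⟨hR0, hR1⟩
  have hρpos : 0 < R ^ (1 + Φ R) := Real.rpow_pos_of_pos hR0 _
  have hρle : R ^ (1 + Φ R) ≤ R := by
    have h := Real.rpow_le_rpow_of_exponent_ge hR0 hR1.le (by linarith : (1:ℝ) ≤ 1 + Φ R)
    rwa [Real.rpow_one] at h
  have hc₀pos : (0:ℝ) < (1 - B) * (2/3) := by
    have : (0:ℝ) < 1 - B := by linarith
    linarith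
  set c₀ : ℝ := Real.log ((1 - B) * (2/3)) with hc₀def
  have hev1 : ∀ᶠ m : ℕ in atTop, (3/2) * Real.exp (SZ m) < R ^ (1 + Φ R) := by
    have h := hLto.const_mul (3/2 : ℝ)
    rw [mul_zero] at h
    exact h.eventually_lt_const hρpos
  have hev2 : ∀ᶠ m : ℕ in atTop, T m < T n₀ + Real.log C₂ + d * c₀ - 1 :=
    hTbot.eventually (eventually_lt_atBot _)
  obtain ⟨m, hm1, hm2, hm3⟩ := (hev1.and (hev2.and (eventually_ge_atTop n₀))).exists
  set r : ℝ := (3/2) * Real.exp (SZ m) with hrdef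
  have hLm : (0:ℝ) < Real.exp (SZ m) := Real.exp_pos _
  have hr0 : 0 < r := by rw [hrdef]; linarith
  have hkey := hadm x hxsupp R r hr0 (by rw [hrdef]; exact hm1) hρle hRC₁
  have hlow := hball_low m r (by rw [hrdef]; linarith)
  have hup := hball_up n₀
  have hRr0 : (0:ℝ) < R / r := div_pos hR0 hr0
  have h1 : ENNReal.ofReal (C₂ * (R / r) ^ d * Real.exp (SY m))
      ≤ ENNReal.ofReal (Real.exp (SY n₀)) := by
    have hfac : (0:ℝ) ≤ C₂ * (R / r) ^ d := by positivity
    rw [ENNReal.ofReal_mul hfac]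
    calc ENNReal.ofReal (C₂ * (R / r) ^ d) * ENNReal.ofReal (Real.exp (SY m))
        ≤ ENNReal.ofReal (C₂ * (R / r) ^ d) * μ ω (ball x r) := mul_le_mul_right hlow _
      _ ≤ μ ω (ball x R) := hkey
      _ ≤ ENNReal.ofReal (Real.exp (SY n₀)) := hup
  have h2 : C₂ * (R / r) ^ d * Real.exp (SY m) ≤ Real.exp (SY n₀) :=
    (ENNReal.ofReal_le_ofReal_iff (Real.exp_pos _).le).mp h1
  have hlhs0 : (0:ℝ) < C₂ * (R / r) ^ d * Real.exp (SY m) := by positivity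
  have hlog := Real.log_le_log hlhs0 h2
  rw [Real.log_mul (ne_of_gt (by positivity : (0:ℝ) < C₂ * (R / r) ^ d)) (Real.exp_ne_zero _),
      Real.log_mul (ne_of_gt hC₂) (ne_of_gt (Real.rpow_pos_of_pos hRr0 d)),
      Real.log_rpow hRr0, Real.log_exp, Real.log_exp] at hlog
  have hlogRr : Real.log (R / r) = c₀ + (SZ n₀ - SZ m) := by
    have heq : R / r = ((1 - B) * (2/3)) * Real.exp (SZ n₀ - SZ m) := by
      rw [hRdef, hrdef, Real.exp_sub, mul_div_mul_comm]
      ring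
    rw [heq, Real.log_mul (ne_of_gt hc₀pos) (Real.exp_ne_zero _), Real.log_exp, hc₀def]
  rw [hlogRr] at hlog
  have hSZm : SZ m ≤ SZ n₀ := by
    have hsub : SZ m - SZ n₀ = ∑ j ∈ Finset.Ico n₀ m, Zrv' S.a S.b S.p ψ (j+1) ω := by
      simp only [hSZdef]
      exact (Finset.sum_Ico_eq_sub _ hm3).symm
    have hle : (∑ j ∈ Finset.Ico n₀ m, Zrv' S.a S.b S.p ψ (j+1) ω) ≤ 0 :=
      Finset.sum_nonpos fun j _ => le_trans (hZb ω (j+1)).2 hlogB.le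
    rw [← hsub] at hle
    linarith
  have hTn₀ := hTsum n₀
  have hTm' := hTsum m
  have hprod : 0 ≤ (d - (ψ + ε K)) * (SZ n₀ - SZ m) :=
    mul_nonneg (by linarith) (by linarith)
  nlinarith [hprod, hlog, hm2, hTn₀, hTm']

end
end
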